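/- arXiv:2310.04660 — 6 statements merged into one kernel-verified Lean document; each statement's English description precedes it below -/
import Mathlib

section
/- Suppose the matrix G_uu has full row rank, and suppose the negligibility of high-order interactions holds, i.e. 0 = G_uo^T y_o + G_uu^T y_u, where y_o = (E[Y(z)])_{z∈Z_o} and y_u = (E[Y(z)])_{z∈Z_u}. Then the vector of non-negligible factorial effects is identified from the observed treatment combinations alone: τ^o = 2^{−(K−1)} G_o^T y_o, where G_o^T = G_oo^T − G_ou^T (G_uu^T)^† G_uo^T and (G_uu^T)^† = (G_uu G_uu^T)^{-1} G_uu is the Moore–Penrose pseudoinverse of G_uu^T. -/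
open MeasureTheory ProbabilityTheory Filter Finset BoundedContinuousFunction
open scoped NNReal ENNReal

noncomputable section

/-- Sign coding of a binary factor level: `true ↦ +1`, `false ↦ -1`. -/
def sgn (b : Bool) : ℝ := if b then 1 else -1

/-- Contrast coefficient `g_{𝒦 z} = ∏_{k ∈ 𝒦} z_k`. -/
def contrastG {K : ℕ} (𝒦 : Finset (Fin K)) (z : Fin K → Bool) : ℝ :=
  ∏ k ∈ 𝒦, sgn (z k)

/-- Positive part `g⁺_{𝒦 z}`. -/
def gpos {K : ℕ} (𝒦 : Finset (Fin K)) (z : Fin K → Bool) : ℝ := max (contrastG 𝒦 z) 0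

/-- Negative part `g⁻_{𝒦 z}`. -/
def gneg {K : ℕ} (𝒦 : Finset (Fin K)) (z : Fin K → Bool) : ℝ := max (-(contrastG 𝒦 z)) 0

/-- `A⁺_{i𝒦} = ∑_z g⁺_{𝒦 z} 1(Z_i = z)`. -/
def Apos {K : ℕ} (𝒦 : Finset (Fin K)) (Zi : Fin K → Bool) : ℝ :=
  ∑ z : Fin K → Bool, gpos 𝒦 z * (if Zi = z then 1 else 0)

/-- `A⁻_{i𝒦} = 1 - A⁺_{i𝒦}`. -/
def Aneg {K : ℕ} (𝒦 : Finset (Fin K)) (Zi : Fin K → Bool) : ℝ := 1 - Apos 𝒦 Zi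

/-- `[K]_{K'}`: nonempty subsets of the `K` factors of cardinality at most `K'`. -/
def KKset (K K' : ℕ) : Finset (Finset (Fin K)) :=
  Finset.univ.filter fun J => J.Nonempty ∧ J.card ≤ K'

/-- Basis functions `q_{sJ}(x, z) = h_s(x) ∏_{j ∈ J} z_j`. -/
def qfun {S D K : ℕ} (h : Fin S → (Fin D → ℝ) → ℝ) (s : Fin S) (J : Finset (Fin K))
    (x : Fin D → ℝ) (z : Fin K → Bool) : ℝ :=
  h s x * ∏ j ∈ J, sgn (z j)

/-- Index set for the components of `q(x,z)`: pairs `(s, J)` with `J ∈ [K]_{K'}`. -/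
abbrev qIndex (K K' S : ℕ) := Fin S × {J : Finset (Fin K) // J ∈ KKset K K'}

/-- The vector `q(x,z)`. -/
def qvec {K S D : ℕ} (K' : ℕ) (h : Fin S → (Fin D → ℝ) → ℝ)
    (x : Fin D → ℝ) (z : Fin K → Bool) : qIndex K K' S → ℝ :=
  fun p => qfun h p.1 p.2.1 x z

/-- Index set for the components of the balance vectors `B_i`, `b_i`:
sign (positive/negative part) × contrast `𝒦 ∈ [K]_{K'}` × component `(s, J)`. -/
abbrev BIndex (K K' S : ℕ) :=
  Bool × {𝒦 : Finset (Fin K) // 𝒦 ∈ KKset K K'} × qIndex K K' S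

/-- The vector `B_i`, with entries `A⁺_{i𝒦} q_{sJ}(X_i, Z_i)` and `A⁻_{i𝒦} q_{sJ}(X_i, Z_i)`. -/
def Bvec {K S D : ℕ} (K' : ℕ) (h : Fin S → (Fin D → ℝ) → ℝ)
    (x : Fin D → ℝ) (z : Fin K → Bool) : BIndex K K' S → ℝ :=
  fun p => (if p.1 then Apos p.2.1.1 z else Aneg p.2.1.1 z) * qvec K' h x z p.2.2

/-- The vector `b_i`, with entries `2^{-(K-1)} ∑_z g^±_{𝒦 z} q_{sJ}(X_i, z)`. -/
def bvec {K S D : ℕ} (K' : ℕ) (h : Fin S → (Fin D → ℝ) → ℝ)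
    (x : Fin D → ℝ) : BIndex K K' S → ℝ :=
  fun p => (2 ^ (K - 1) : ℝ)⁻¹ *
    ∑ z : Fin K → Bool, (if p.1 then gpos p.2.1.1 z else gneg p.2.1.1 z) * qvec K' h x z p.2.2

/-- Euclidean inner product on `ι → ℝ`. -/
def dotP {ι : Type*} [Fintype ι] (v w : ι → ℝ) : ℝ := ∑ p, v p * w p

/-- `ψ_i(λ) = -¼ (λᵀB_i)² 1(λᵀB_i < 0) - λᵀb_i`. -/
def psiFun {ι : Type*} [Fintype ι] (B b lam : ι → ℝ) : ℝ :=
  -(1 / 4) * dotP lam B ^ 2 * (if dotP lam B < 0 then 1 else 0) - dotP lam b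

/-- Gradient `ψ_i'(λ) = -½ B_i B_iᵀ λ 1(λᵀB_i < 0) - b_i`. -/
def psiGrad {ι : Type*} [Fintype ι] (B b lam : ι → ℝ) : ι → ℝ :=
  fun p => -(1 / 2) * dotP lam B * (if dotP lam B < 0 then 1 else 0) * B p - b p

/-- The weight `w_i(λ) = -λᵀB_i 1(λᵀB_i < 0)/2`. -/
def wFun {ι : Type*} [Fintype ι] (B lam : ι → ℝ) : ℝ :=
  -dotP lam B * (if dotP lam B < 0 then 1 else 0) / 2

/-- Euclidean norm `‖·‖₂` on `ι → ℝ`. -/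
def l2norm {ι : Type*} [Fintype ι] (v : ι → ℝ) : ℝ := Real.sqrt (∑ p, v p ^ 2)

open Matrix

variable (K K' : ℕ) (Zu : Finset (Fin K → Bool))

/-- Block of `G` for observed treatment combinations and non-negligible contrasts. -/
def Goo : Matrix {z : Fin K → Bool // z ∉ Zu} {𝒦 : Finset (Fin K) // 𝒦.card ≤ K'} ℝ :=
  fun z 𝒦 => contrastG 𝒦.1 z.1

/-- Block of `G` for observed treatment combinations and negligible contrasts. -/
def Guo : Matrix {z : Fin K → Bool // z ∉ Zu} {𝒦 : Finset (Fin K) // K' < 𝒦.card} ℝ :=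
  fun z 𝒦 => contrastG 𝒦.1 z.1

/-- Block of `G` for unobserved treatment combinations and non-negligible contrasts. -/
def Gou : Matrix {z : Fin K → Bool // z ∈ Zu} {𝒦 : Finset (Fin K) // 𝒦.card ≤ K'} ℝ :=
  fun z 𝒦 => contrastG 𝒦.1 z.1

/-- Block of `G` for unobserved treatment combinations and negligible contrasts. -/
def Guu : Matrix {z : Fin K → Bool // z ∈ Zu} {𝒦 : Finset (Fin K) // K' < 𝒦.card} ℝ :=
  fun z 𝒦 => contrastG 𝒦.1 z.1

/-- Suppose `G_uu` has full row rank and the negligibility of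
high-order interactions holds, i.e. `0 = G_uoᵀ y_o + G_uuᵀ y_u` where
`y_o = (E[Y(z)])_{z ∈ Z_o}` and `y_u = (E[Y(z)])_{z ∈ Z_u}`. Then the vector of
non-negligible factorial effects `τ^o = 2^{−(K−1)} (G_ooᵀ y_o + G_ouᵀ y_u)` is
identified from the observed treatment combinations alone:
`τ^o = 2^{−(K−1)} (G_ooᵀ − G_ouᵀ (G_uuᵀ)† G_uoᵀ) y_o`, where
`(G_uuᵀ)† = (G_uu G_uuᵀ)⁻¹ G_uu`. -/
theorem statement3 (hK : 2 ≤ K) (hK' : K' ≤ K)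
    (hrank : (Guu K K' Zu).rank = Fintype.card {z : Fin K → Bool // z ∈ Zu})
    (yo : {z : Fin K → Bool // z ∉ Zu} → ℝ) (yu : {z : Fin K → Bool // z ∈ Zu} → ℝ)
    (hneg : (0 : {𝒦 : Finset (Fin K) // K' < 𝒦.card} → ℝ)
      = (Guo K K' Zu)ᵀ.mulVec yo + (Guu K K' Zu)ᵀ.mulVec yu) :
    (2 ^ (K - 1) : ℝ)⁻¹ • ((Goo K K' Zu)ᵀ.mulVec yo + (Gou K K' Zu)ᵀ.mulVec yu)
      = (2 ^ (K - 1) : ℝ)⁻¹ •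
        (((Goo K K' Zu)ᵀ
          - (Gou K K' Zu)ᵀ * (((Guu K K' Zu) * (Guu K K' Zu)ᵀ)⁻¹ * (Guu K K' Zu))
            * (Guo K K' Zu)ᵀ).mulVec yo) := by
  set A := Guu K K' Zu with hAdef
  have hGuo : (Guo K K' Zu)ᵀ.mulVec yo = -(Aᵀ.mulVec yu) := by
    have h := hneg.symm
    funext i
    have := congrFun h i
    simp only [Pi.add_apply, Pi.zero_apply, Pi.neg_apply] at this ⊢
    linarith
  have hM : IsUnit (A * Aᵀ) := by
    rw [← Matrix.mulVec_surjective_iff_isUnit]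
    have hr : (A * Aᵀ).rank = Fintype.card {z : Fin K → Bool // z ∈ Zu} := by
      rw [Matrix.rank_self_mul_transpose]; exact hrank
    have htop : LinearMap.range (A * Aᵀ).mulVecLin = ⊤ := by
      apply Submodule.eq_top_of_finrank_eq
      rw [Module.finrank_fintype_fun_eq_card]
      exact hr
    intro v
    have : v ∈ LinearMap.range (A * Aᵀ).mulVecLin := htop ▸ Submodule.mem_top
    obtain ⟨w, hw⟩ := this
    exact ⟨w, hw⟩
  have h1 : (A * Aᵀ)⁻¹ * (A * Aᵀ) = 1 :=
    Matrix.nonsing_inv_mul _ ((Matrix.isUnit_iff_isUnit_det _).mp hM)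
  have key : (((A * Aᵀ)⁻¹ * A) * (Guo K K' Zu)ᵀ).mulVec yo = -yu := by
    rw [← Matrix.mulVec_mulVec, hGuo, Matrix.mulVec_neg, Matrix.mulVec_mulVec,
      Matrix.mul_assoc, h1, Matrix.one_mulVec]
  congr 1
  rw [Matrix.sub_mulVec, Matrix.mul_assoc, ← Matrix.mulVec_mulVec, key,
    Matrix.mulVec_neg, sub_neg_eq_add]

end
end

section
/- For any set of bounded orthonormal basis functions h_s, s = 1,…,S, of the covariate space with respect to the covariate density f (i.e. ∫ h_s(x) h_t(x) f(x) dx equals 1 if s = t and 0 otherwise, and each |h_s| is bounded), and X_1,…,X_N i.i.d. with density f: if (S² log S)/N → 0, then for all sufficiently large N the S vectors (h_s(X_1),…,h_s(X_N)) ∈ ℝ^N, s = 1,…,S, are linearly independent with probability greater than 1 − 1/N. -/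
open MeasureTheory ProbabilityTheory Filter Finset BoundedContinuousFunction
open scoped NNReal ENNReal

noncomputable section

lemma aux_exp_le {x : ℝ} (hx : x ≤ 1) : Real.exp x ≤ 1 + x + x ^ 2 := by
  rcases le_or_gt x (-1) with h | h
  · have h1 : Real.exp x ≤ 1 := (Real.exp_le_one_iff).2 (by linarith)
    nlinarith
  · have habs : |x| ≤ 1 := abs_le.2 ⟨by linarith, hx⟩
    have := Real.exp_bound habs (n := 2) (by norm_num)
    have h2 : Real.exp x - (1 + x) ≤ |x| ^ 2 * (3 / (2 * 2)) := by
      have hs : ∑ m ∈ Finset.range 2, x ^ m / m.factorial = 1 + x := by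
        simp [Finset.sum_range_succ]
      rw [hs] at this
      have := (abs_sub_le_iff.1 this).1
      refine this.trans (le_of_eq ?_)
      norm_num [Nat.factorial]
    have h3 : |x| ^ 2 = x ^ 2 := sq_abs x
    nlinarith [sq_nonneg x]

lemma sum_lintegral_le {α ι : Type*} [MeasurableSpace α] (μ : Measure α) (s : Finset ι)
    (f : ι → α → ℝ≥0∞) :
    ∑ i ∈ s, ∫⁻ x, f i x ∂μ ≤ ∫⁻ x, ∑ i ∈ s, f i x ∂μ := by
  classical
  induction s using Finset.induction_on with
  | empty => simp
  | insert a s hnot ih =>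
    rw [Finset.sum_insert hnot]
    calc ∫⁻ x, f a x ∂μ + ∑ i ∈ s, ∫⁻ x, f i x ∂μ
        ≤ ∫⁻ x, f a x ∂μ + ∫⁻ x, ∑ i ∈ s, f i x ∂μ := by gcongr
      _ ≤ ∫⁻ x, (f a x + ∑ i ∈ s, f i x) ∂μ := le_lintegral_add _ _
      _ = ∫⁻ x, ∑ i ∈ insert a s, f i x ∂μ := by
          simp_rw [Finset.sum_insert hnot]

lemma simple_lintegral_withDensity_le {α : Type*} [MeasurableSpace α] (μ : Measure α)
    (ρ : α → ℝ≥0∞) (φ : SimpleFunc α ℝ≥0∞) :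
    φ.lintegral (μ.withDensity ρ) ≤ ∫⁻ x, φ x * ρ x ∂μ := by
  rw [SimpleFunc.lintegral]
  calc ∑ y ∈ φ.range, y * (μ.withDensity ρ) (φ ⁻¹' {y})
      = ∑ y ∈ φ.range, y * ∫⁻ x in φ ⁻¹' {y}, ρ x ∂μ := by
        refine Finset.sum_congr rfl fun y _ => ?_
        rw [withDensity_apply _ (φ.measurableSet_preimage _)]
    _ ≤ ∑ y ∈ φ.range, ∫⁻ x in φ ⁻¹' {y}, y * ρ x ∂μ := by
        refine Finset.sum_le_sum fun y _ => lintegral_const_mul_le _ _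
    _ = ∑ y ∈ φ.range, ∫⁻ x, (φ ⁻¹' {y}).indicator (fun x => y * ρ x) x ∂μ := by
        refine Finset.sum_congr rfl fun y _ => ?_
        rw [lintegral_indicator (φ.measurableSet_preimage _)]
    _ ≤ ∫⁻ x, ∑ y ∈ φ.range, (φ ⁻¹' {y}).indicator (fun x => y * ρ x) x ∂μ :=
        sum_lintegral_le _ _ _
    _ = ∫⁻ x, φ x * ρ x ∂μ := by
        refine lintegral_congr fun x => ?_
        rw [Finset.sum_eq_single_of_mem (φ x) (φ.mem_range_self x)]
        · rw [Set.indicator_of_mem (by simp : x ∈ φ ⁻¹' {φ x})]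
        · intro y _ hy
          exact Set.indicator_of_notMem (by simpa using (Ne.symm hy)) _

lemma lintegral_withDensity_le_mul {α : Type*} [MeasurableSpace α] (μ : Measure α)
    (ρ : α → ℝ≥0∞) {g : α → ℝ≥0∞} (hg : Measurable g) :
    ∫⁻ x, g x ∂(μ.withDensity ρ) ≤ ∫⁻ x, g x * ρ x ∂μ := by
  rw [lintegral_eq_iSup_eapprox_lintegral hg]
  refine iSup_le fun n => ?_
  refine (simple_lintegral_withDensity_le μ ρ _).trans ?_
  refine lintegral_mono fun x => ?_
  gcongr
  rw [← SimpleFunc.iSup_eapprox_apply hg]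
  exact le_iSup (fun n => (SimpleFunc.eapprox g n) x) n

lemma lintegral_mul_le_withDensity {α : Type*} [MeasurableSpace α] (μ : Measure α)
    (ρ : α → ℝ≥0∞) {g : α → ℝ≥0∞} (hg : Measurable g) {C : ℝ≥0∞} (hC : C ≠ ⊤)
    (hgC : ∀ x, g x ≤ C) (hT : ∫⁻ x, ρ x ∂μ ≠ ⊤) :
    ∫⁻ x, g x * ρ x ∂μ ≤ ∫⁻ x, g x ∂(μ.withDensity ρ) := by
  set ν := μ.withDensity ρ with hν
  have hTuniv : ν Set.univ = ∫⁻ x, ρ x ∂μ := by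
    rw [hν, withDensity_apply _ MeasurableSet.univ, setLIntegral_univ]
  have hgν_fin : ∫⁻ x, g x ∂ν ≠ ⊤ := by
    refine ne_of_lt (lt_of_le_of_lt (lintegral_mono hgC) ?_)
    rw [lintegral_const, hTuniv]
    exact ENNReal.mul_lt_top hC.lt_top hT.lt_top
  have hsub : ∫⁻ x, (C - g x) ∂ν = C * ν Set.univ - ∫⁻ x, g x ∂ν := by
    have := lintegral_sub (μ := ν) (f := fun _ => C) hg hgν_fin (ae_of_all _ hgC)
    simpa [lintegral_const] using this
  -- superadditivity step
  have hsuper : ∫⁻ x, g x * ρ x ∂μ + ∫⁻ x, (C - g x) * ρ x ∂μ ≤ C * ν Set.univ := by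
    calc ∫⁻ x, g x * ρ x ∂μ + ∫⁻ x, (C - g x) * ρ x ∂μ
        ≤ ∫⁻ x, (g x * ρ x + (C - g x) * ρ x) ∂μ := le_lintegral_add _ _
      _ = ∫⁻ x, C * ρ x ∂μ := by
          refine lintegral_congr fun x => ?_
          rw [← add_mul, add_tsub_cancel_of_le (hgC x)]
      _ = C * ν Set.univ := by
          rw [lintegral_const_mul' _ _ hC, hTuniv]
  have heasy : ∫⁻ x, (C - g x) ∂ν ≤ ∫⁻ x, (C - g x) * ρ x ∂μ :=
    lintegral_withDensity_le_mul μ ρ (measurable_const.sub hg)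
  have hCT : C * ν Set.univ ≠ ⊤ := by
    rw [hTuniv]; exact ENNReal.mul_ne_top hC hT
  have hbne : ∫⁻ x, (C - g x) * ρ x ∂μ ≠ ⊤ := by
    refine ne_of_lt (lt_of_le_of_lt (le_trans ?_ hsuper) hCT.lt_top)
    exact le_add_self
  have h1 : ∫⁻ x, g x * ρ x ∂μ ≤ C * ν Set.univ - ∫⁻ x, (C - g x) * ρ x ∂μ :=
    ENNReal.le_sub_of_add_le_right hbne hsuper
  refine h1.trans ?_
  have h2 : C * ν Set.univ - ∫⁻ x, (C - g x) * ρ x ∂μ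
      ≤ C * ν Set.univ - (C * ν Set.univ - ∫⁻ x, g x ∂ν) := by
    refine tsub_le_tsub_left ?_ _
    rw [← hsub]; exact heasy
  refine h2.trans ?_
  exact tsub_le_iff_right.mpr (by rw [add_comm]; exact le_tsub_add)

section hoeff
variable {Ω : Type*} [MeasurableSpace Ω] (P : Measure Ω) [IsProbabilityMeasure P]

lemma integrable_of_bdd {Y : Ω → ℝ} (hm : Measurable Y) {c : ℝ} (hb : ∀ ω, |Y ω| ≤ c) :
    Integrable Y P := by
  refine (integrable_const c).mono' hm.aestronglyMeasurable (ae_of_all _ fun ω => ?_)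
  simpa using hb ω

lemma mgf_le_of_bdd {Y : Ω → ℝ} (hm : Measurable Y) {c t : ℝ} (hb : ∀ ω, |Y ω| ≤ c)
    (h0 : ∫ ω, Y ω ∂P = 0) (ht : 0 ≤ t) (htc : t * c ≤ 1) :
    mgf Y P t ≤ Real.exp (t ^ 2 * c ^ 2) := by
  have hYint : Integrable Y P := integrable_of_bdd P hm hb
  have hY2int : Integrable (fun ω => Y ω ^ 2) P := by
    refine integrable_of_bdd P (hm.pow_const 2) (c := c ^ 2) fun ω => ?_
    rw [abs_pow]
    exact pow_le_pow_left₀ (abs_nonneg _) (hb ω) 2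
  have hexp_int : Integrable (fun ω => Real.exp (t * Y ω)) P := by
    refine integrable_of_bdd P ((hm.const_mul t).exp) (c := Real.exp (t * c)) fun ω => ?_
    rw [abs_of_pos (Real.exp_pos _), Real.exp_le_exp]
    calc t * Y ω ≤ t * |Y ω| := by nlinarith [le_abs_self (Y ω)]
      _ ≤ t * c := by nlinarith [(abs_nonneg (Y ω)).trans (hb ω), hb ω]
  have hpt : ∀ ω, Real.exp (t * Y ω) ≤ 1 + t * Y ω + t ^ 2 * Y ω ^ 2 := by
    intro ω
    have h1 : t * Y ω ≤ 1 := by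
      calc t * Y ω ≤ t * |Y ω| := by nlinarith [le_abs_self (Y ω)]
        _ ≤ t * c := by nlinarith [(abs_nonneg (Y ω)).trans (hb ω), hb ω]
        _ ≤ 1 := htc
    have := aux_exp_le h1
    nlinarith [this]
  have hrhs_int : Integrable (fun ω => 1 + t * Y ω + t ^ 2 * Y ω ^ 2) P :=
    ((integrable_const 1).add (hYint.const_mul t)).add (hY2int.const_mul (t ^ 2))
  have hint : mgf Y P t ≤ ∫ ω, (1 + t * Y ω + t ^ 2 * Y ω ^ 2) ∂P := by
    exact integral_mono hexp_int hrhs_int hpt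
  have hval : ∫ ω, (1 + t * Y ω + t ^ 2 * Y ω ^ 2) ∂P
      = 1 + t * (∫ ω, Y ω ∂P) + t ^ 2 * ∫ ω, Y ω ^ 2 ∂P := by
    have e1 : ∫ ω, (1 + t * Y ω + t ^ 2 * Y ω ^ 2) ∂P
        = (∫ ω, (1 + t * Y ω) ∂P) + ∫ ω, t ^ 2 * Y ω ^ 2 ∂P :=
      integral_add ((integrable_const 1).add (hYint.const_mul t)) (hY2int.const_mul (t ^ 2))
    have e2 : ∫ ω, (1 + t * Y ω) ∂P = (∫ _ω, (1 : ℝ) ∂P) + ∫ ω, t * Y ω ∂P :=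
      integral_add (integrable_const 1) (hYint.const_mul t)
    rw [e1, e2, integral_const_mul, integral_const_mul]
    simp
  have hY2 : ∫ ω, Y ω ^ 2 ∂P ≤ c ^ 2 := by
    calc ∫ ω, Y ω ^ 2 ∂P ≤ ∫ _ω, c ^ 2 ∂P := by
          refine integral_mono hY2int (integrable_const _) fun ω => ?_
          nlinarith [hb ω, abs_nonneg (Y ω), sq_abs (Y ω), le_abs_self (Y ω)]
      _ = c ^ 2 := by simp
  calc mgf Y P t ≤ 1 + t * 0 + t ^ 2 * ∫ ω, Y ω ^ 2 ∂P := by rw [← h0]; rw [hval] at hint; linarith [hint]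
    _ ≤ 1 + t ^ 2 * c ^ 2 := by nlinarith [sq_nonneg t]
    _ ≤ Real.exp (t ^ 2 * c ^ 2) := by
        have := Real.add_one_le_exp (t ^ 2 * c ^ 2); linarith

lemma chernoff_iid {Y : ℕ → Ω → ℝ} (hind : iIndepFun Y P)
    (hm : ∀ i, Measurable (Y i)) {c ε : ℝ} (hc : 0 < c) (hb : ∀ i ω, |Y i ω| ≤ c)
    (h0 : ∀ i, ∫ ω, Y i ω ∂P = 0) (hε : 0 ≤ ε) (hεc : ε ≤ 2 * c) (N : ℕ) :
    (P {ω | (N : ℝ) * ε ≤ ∑ i ∈ Finset.range N, Y i ω}).toReal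
      ≤ Real.exp (-(N : ℝ) * ε ^ 2 / (4 * c ^ 2)) := by
  set t : ℝ := ε / (2 * c ^ 2) with hts
  have ht : 0 ≤ t := by positivity
  have htc : t * c ≤ 1 := by
    rw [hts]; rw [div_mul_eq_mul_div, div_le_one (by positivity)]; nlinarith
  have hexp_int : ∀ i, Integrable (fun ω => Real.exp (t * Y i ω)) P := by
    intro i
    refine (integrable_const (Real.exp (t * c))).mono'
      ((((hm i).const_mul t).exp).aestronglyMeasurable) (ae_of_all _ fun ω => ?_)
    rw [Real.norm_eq_abs, abs_of_pos (Real.exp_pos _), Real.exp_le_exp]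
    nlinarith [le_abs_self (Y i ω), hb i ω, (abs_nonneg (Y i ω)).trans (hb i ω)]
  have hsum_int : Integrable (fun ω => Real.exp (t * (∑ i ∈ Finset.range N, Y i) ω)) P :=
    hind.integrable_exp_mul_sum hm fun i _ => hexp_int i
  have hch := measure_ge_le_exp_mul_mgf (μ := P) (X := ∑ i ∈ Finset.range N, Y i)
    ((N : ℝ) * ε) ht hsum_int
  have hset : {ω | (N : ℝ) * ε ≤ (∑ i ∈ Finset.range N, Y i) ω}
      = {ω | (N : ℝ) * ε ≤ ∑ i ∈ Finset.range N, Y i ω} := by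
    ext ω; simp [Finset.sum_apply]
  rw [hset] at hch
  refine hch.trans ?_
  have hmgf : mgf (∑ i ∈ Finset.range N, Y i) P t ≤ Real.exp (t ^ 2 * c ^ 2) ^ N := by
    rw [hind.mgf_sum hm]
    calc ∏ i ∈ Finset.range N, mgf (Y i) P t
        ≤ ∏ _i ∈ Finset.range N, Real.exp (t ^ 2 * c ^ 2) := by
          refine Finset.prod_le_prod (fun i _ => mgf_nonneg) fun i _ => ?_
          exact mgf_le_of_bdd P (hm i) (hb i) (h0 i) ht htc
      _ = Real.exp (t ^ 2 * c ^ 2) ^ N := by rw [Finset.prod_const, Finset.card_range]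
  calc Real.exp (-t * ((N : ℝ) * ε)) * mgf (∑ i ∈ Finset.range N, Y i) P t
      ≤ Real.exp (-t * ((N : ℝ) * ε)) * Real.exp (t ^ 2 * c ^ 2) ^ N := by
        exact mul_le_mul_of_nonneg_left hmgf (Real.exp_pos _).le
    _ = Real.exp (-t * ((N : ℝ) * ε) + (N : ℝ) * (t ^ 2 * c ^ 2)) := by
        rw [← Real.exp_nat_mul, ← Real.exp_add, mul_comm (N : ℝ)]
    _ = Real.exp (-(N : ℝ) * ε ^ 2 / (4 * c ^ 2)) := by
        congr 1
        rw [hts]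
        field_simp
        ring
end hoeff

section gram
variable {D S : ℕ} (f : (Fin D → ℝ) → ℝ) (h : Fin S → (Fin D → ℝ) → ℝ) (u : ℝ)

lemma pf_integrable (hmeas : ∀ s, Measurable (h s))
    (horth : ∀ s t : Fin S, ∫ x, h s x * h t x * f x = if s = t then (1 : ℝ) else 0)
    (s t : Fin S) : Integrable (fun x => h s x * h t x * f x) MeasureTheory.volume := by
  have hdiag : ∀ s : Fin S, Integrable (fun x => h s x * h s x * f x) volume := by
    intro s
    by_contra hni
    have := horth s s
    rw [integral_undef hni] at this
    simp at this
  set w : (Fin D → ℝ) → ℝ := fun x => (h s x * h t x) / (h s x * h s x + h t x * h t x) with hw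
  have hwmeas : Measurable w := ((hmeas s).mul (hmeas t)).div
    (((hmeas s).mul (hmeas s)).add ((hmeas t).mul (hmeas t)))
  have hwbd : ∀ x, ‖w x‖ ≤ 1 := by
    intro x
    rw [hw, Real.norm_eq_abs]
    rcases eq_or_ne (h s x * h s x + h t x * h t x) 0 with hz | hz
    · simp [hz]
    · have hpos : 0 < |h s x * h s x + h t x * h t x| := abs_pos.2 hz
      rw [abs_div, div_le_one hpos]
      have h1 : |h s x * h t x| ≤ h s x * h s x + h t x * h t x := by
        rw [abs_mul]
        nlinarith [abs_nonneg (h s x), abs_nonneg (h t x), sq_abs (h s x), sq_abs (h t x),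
          sq_nonneg (|h s x| - |h t x|)]
      calc |h s x * h t x| ≤ h s x * h s x + h t x * h t x := h1
        _ ≤ |h s x * h s x + h t x * h t x| := le_abs_self _
  have heq : (fun x => h s x * h t x * f x)
      = fun x => w x * (h s x * h s x * f x + h t x * h t x * f x) := by
    funext x
    rcases eq_or_ne (h s x * h s x + h t x * h t x) 0 with hz | hz
    · have hs0 : h s x = 0 := by nlinarith [sq_nonneg (h s x), sq_nonneg (h t x)]
      have ht0 : h t x = 0 := by nlinarith [sq_nonneg (h s x), sq_nonneg (h t x)]
      simp [hs0, ht0]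
    · rw [hw]
      show h s x * h t x * f x = h s x * h t x / (h s x * h s x + h t x * h t x) * (h s x * h s x * f x + h t x * h t x * f x)
      rw [div_mul_eq_mul_div, eq_div_iff hz]
      ring
  rw [heq]
  have hsum : Integrable (fun x => h s x * h s x * f x + h t x * h t x * f x) volume :=
    (hdiag s).add (hdiag t)
  exact hsum.bdd_mul hwmeas.aestronglyMeasurable (ae_of_all _ hwbd)
end gram

lemma gram_lb {D S : ℕ} (f : (Fin D → ℝ) → ℝ) (h : Fin S → (Fin D → ℝ) → ℝ) (u : ℝ)
    (hmeas : ∀ s, Measurable (h s)) (hbound : ∀ s x, |h s x| ≤ u)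
    (horth : ∀ s t : Fin S, ∫ x, h s x * h t x * f x = if s = t then (1 : ℝ) else 0)
    (hprob : IsProbabilityMeasure
      (MeasureTheory.volume.withDensity fun x => ENNReal.ofReal (f x)))
    (c : Fin S → ℝ) :
    (∑ s, c s ^ 2)
      ≤ ∑ s, ∑ t, c s * c t *
          ∫ x, h s x * h t x ∂(MeasureTheory.volume.withDensity fun x => ENNReal.ofReal (f x)) := by
  set ρ : (Fin D → ℝ) → ℝ≥0∞ := fun x => ENNReal.ofReal (f x) with hρ
  set ν : Measure (Fin D → ℝ) := MeasureTheory.volume.withDensity ρ with hνdef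
  set H : (Fin D → ℝ) → ℝ := fun x => (∑ s, c s * h s x) ^ 2 with hH
  have hHmeas : Measurable H := by
    apply Measurable.pow_const
    exact Finset.measurable_sum _ fun s _ => (measurable_const.mul (hmeas s))
  have hHnn : ∀ x, 0 ≤ H x := fun x => sq_nonneg _
  set Cb : ℝ := (∑ s, |c s| * u) ^ 2 with hCb
  have hHbd : ∀ x, H x ≤ Cb := by
    intro x
    rw [hH, hCb]
    have habs : |∑ s, c s * h s x| ≤ ∑ s, |c s| * u := by
      refine (Finset.abs_sum_le_sum_abs _ _).trans ?_
      refine Finset.sum_le_sum fun s _ => ?_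
      rw [abs_mul]
      exact mul_le_mul_of_nonneg_left (hbound s x) (abs_nonneg _)
    calc (∑ s, c s * h s x) ^ 2 = |∑ s, c s * h s x| ^ 2 := (sq_abs _).symm
      _ ≤ (∑ s, |c s| * u) ^ 2 := by
          exact pow_le_pow_left₀ (abs_nonneg _) habs 2
  have hpint : ∀ s t : Fin S, Integrable (fun x => h s x * h t x) ν := by
    intro s t
    refine (integrable_const (u * u)).mono'
      ((hmeas s).mul (hmeas t)).aestronglyMeasurable (ae_of_all _ fun x => ?_)
    rw [Real.norm_eq_abs, abs_mul]
    have h1 := hbound s x; have h2 := hbound t x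
    have h3 := abs_nonneg (h s x); have h4 := abs_nonneg (h t x)
    nlinarith
  have hpfint : ∀ s t : Fin S, Integrable (fun x => h s x * h t x * f x) volume :=
    pf_integrable f h hmeas horth
  have hexp : ∀ x, H x = ∑ s, ∑ t, c s * c t * (h s x * h t x) := by
    intro x
    rw [hH]
    show (∑ s, c s * h s x) ^ 2 = _
    rw [sq, Finset.sum_mul_sum]
    exact Finset.sum_congr rfl fun s _ => Finset.sum_congr rfl fun t _ => by ring
  have hexpf : ∀ x, H x * f x = ∑ s, ∑ t, c s * c t * (h s x * h t x * f x) := by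
    intro x
    rw [hexp x, Finset.sum_mul]
    refine Finset.sum_congr rfl fun s _ => ?_
    rw [Finset.sum_mul]
    exact Finset.sum_congr rfl fun t _ => by ring
  -- step 1
  have step1 : ∑ s, ∑ t, c s * c t * ∫ x, h s x * h t x ∂ν = ∫ x, H x ∂ν := by
    have e1 : ∀ s t : Fin S, c s * c t * ∫ x, h s x * h t x ∂ν
        = ∫ x, c s * c t * (h s x * h t x) ∂ν := fun s t => (integral_const_mul _ _).symm
    calc ∑ s, ∑ t, c s * c t * ∫ x, h s x * h t x ∂ν
        = ∑ s, ∫ x, ∑ t, c s * c t * (h s x * h t x) ∂ν := by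
          refine Finset.sum_congr rfl fun s _ => ?_
          rw [integral_finset_sum _ fun t _ => (hpint s t).const_mul _]
          exact Finset.sum_congr rfl fun t _ => e1 s t
      _ = ∫ x, ∑ s, ∑ t, c s * c t * (h s x * h t x) ∂ν := by
          rw [integral_finset_sum _ fun s _ =>
            integrable_finset_sum _ fun t _ => (hpint s t).const_mul _]
      _ = ∫ x, H x ∂ν := by
          refine integral_congr_ae (ae_of_all _ fun x => (hexp x).symm)
  -- step 2
  have step2 : (∑ s, c s ^ 2) = ∫ x, H x * f x ∂volume := by
    have e1 : ∀ s t : Fin S, c s * c t * ∫ x, h s x * h t x * f x ∂volume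
        = ∫ x, c s * c t * (h s x * h t x * f x) ∂volume :=
      fun s t => (integral_const_mul _ _).symm
    calc (∑ s, c s ^ 2) = ∑ s, ∑ t, c s * c t * ∫ x, h s x * h t x * f x ∂volume := by
          refine Finset.sum_congr rfl fun s _ => ?_
          rw [Finset.sum_eq_single s]
          · rw [horth s s]; simp [sq]
          · intro t _ hts
            rw [horth s t, if_neg (Ne.symm hts)]; ring
          · intro hs; exact absurd (Finset.mem_univ s) hs
      _ = ∑ s, ∫ x, ∑ t, c s * c t * (h s x * h t x * f x) ∂volume := by
          refine Finset.sum_congr rfl fun s _ => ?_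
          rw [integral_finset_sum _ fun t _ => (hpfint s t).const_mul _]
          exact Finset.sum_congr rfl fun t _ => e1 s t
      _ = ∫ x, ∑ s, ∑ t, c s * c t * (h s x * h t x * f x) ∂volume := by
          rw [integral_finset_sum _ fun s _ =>
            integrable_finset_sum _ fun t _ => (hpfint s t).const_mul _]
      _ = ∫ x, H x * f x ∂volume := by
          refine integral_congr_ae (ae_of_all _ fun x => (hexpf x).symm)
  -- step 3
  have hHfint : Integrable (fun x => H x * f x) volume := by
    have heqf : (fun x => H x * f x)
        = fun x => ∑ s, ∑ t, c s * c t * (h s x * h t x * f x) := funext fun x => hexpf x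
    rw [heqf]
    exact integrable_finset_sum _ fun s _ =>
      integrable_finset_sum _ fun t _ => (hpfint s t).const_mul _
  have hTν : ∫⁻ x, ρ x ∂(volume : Measure (Fin D → ℝ)) = 1 := by
    have : ν Set.univ = 1 := measure_univ
    rw [hνdef, withDensity_apply _ MeasurableSet.univ, setLIntegral_univ] at this
    exact this
  have step3 : ∫ x, H x * f x ∂volume ≤ ∫ x, H x ∂ν := by
    have l0 : ∫ x, H x * f x ∂volume
        ≤ (∫⁻ x, ENNReal.ofReal (H x * f x) ∂volume).toReal := by
      rw [integral_eq_lintegral_pos_part_sub_lintegral_neg_part hHfint]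
      exact sub_le_self _ ENNReal.toReal_nonneg
    have l1 : ∫⁻ x, ENNReal.ofReal (H x * f x) ∂volume
        = ∫⁻ x, ENNReal.ofReal (H x) * ρ x ∂volume := by
      refine lintegral_congr fun x => ?_
      rw [hρ, ENNReal.ofReal_mul (hHnn x)]
    have l2 : ∫⁻ x, ENNReal.ofReal (H x) * ρ x ∂volume
        ≤ ∫⁻ x, ENNReal.ofReal (H x) ∂ν := by
      refine lintegral_mul_le_withDensity volume ρ
        (ENNReal.measurable_ofReal.comp hHmeas) (C := ENNReal.ofReal Cb)
        ENNReal.ofReal_ne_top (fun x => ENNReal.ofReal_le_ofReal (hHbd x)) ?_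
      rw [hTν]; exact ENNReal.one_ne_top
    have lfin : ∫⁻ x, ENNReal.ofReal (H x) ∂ν ≠ ⊤ := by
      refine ne_of_lt (lt_of_le_of_lt (lintegral_mono
        fun x => ENNReal.ofReal_le_ofReal (hHbd x)) ?_)
      rw [lintegral_const, measure_univ, mul_one]
      exact ENNReal.ofReal_lt_top
    have l3 : (∫⁻ x, ENNReal.ofReal (H x) ∂ν).toReal = ∫ x, H x ∂ν := by
      rw [integral_eq_lintegral_of_nonneg_ae (ae_of_all _ hHnn) hHmeas.aestronglyMeasurable]
    calc ∫ x, H x * f x ∂volume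
        ≤ (∫⁻ x, ENNReal.ofReal (H x * f x) ∂volume).toReal := l0
      _ ≤ (∫⁻ x, ENNReal.ofReal (H x) ∂ν).toReal := by
          refine ENNReal.toReal_mono lfin ?_
          rw [l1]; exact l2
      _ = ∫ x, H x ∂ν := l3
  rw [step1, step2]
  exact step3


set_option maxHeartbeats 1000000 in
/-- For bounded orthonormal basis functions `h_s` with respect to the
covariate density `f`, and `X_1, …, X_N` i.i.d. with density `f`: if `(S² log S)/N → 0`,
then for all sufficiently large `N` the `S` vectors `(h_s(X_1), …, h_s(X_N)) ∈ ℝ^N` are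
linearly independent with probability greater than `1 − 1/N`. -/
theorem statement4 {Ω : Type*} [MeasurableSpace Ω] (P : Measure Ω) [IsProbabilityMeasure P]
    (D S : ℕ) (u : ℝ)
    (f : (Fin D → ℝ) → ℝ)
    (X : ℕ → Ω → (Fin D → ℝ)) (hXm : ∀ i, Measurable (X i))
    (hiid : iIndepFun X P)
    (hdens : ∀ i, Measure.map (X i) P
      = MeasureTheory.volume.withDensity (fun x => ENNReal.ofReal (f x)))
    (h : Fin S → (Fin D → ℝ) → ℝ) (hmeas : ∀ s, Measurable (h s))
    (hbound : ∀ s x, |h s x| ≤ u)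
    (horth : ∀ s t : Fin S, ∫ x, h s x * h t x * f x = if s = t then (1 : ℝ) else 0)
    (hrate : Tendsto (fun N : ℕ => ((S : ℝ) ^ 2 * Real.log S) / N) atTop (nhds 0)) :
    ∀ᶠ N : ℕ in atTop,
      ENNReal.ofReal (1 - 1 / (N : ℝ)) <
        P {ω | LinearIndependent ℝ (fun s : Fin S => fun i : Fin N => h s (X i ω))} := by
  rcases Nat.eq_zero_or_pos S with hS0 | hSpos
  · subst hS0
    filter_upwards [eventually_ge_atTop 1] with N hN
    have hset : {ω | LinearIndependent ℝ (fun s : Fin 0 => fun i : Fin N => h s (X i ω))}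
        = Set.univ := by
      ext ω; simp only [Set.mem_setOf_eq, Set.mem_univ, iff_true]
      exact linearIndependent_empty_type
    rw [hset, measure_univ]
    rw [ENNReal.ofReal_lt_one]
    have : (0 : ℝ) < 1 / (N : ℝ) := by positivity
    linarith
  -- main case
  set ν : Measure (Fin D → ℝ) :=
    MeasureTheory.volume.withDensity (fun x => ENNReal.ofReal (f x)) with hνdef
  have hνprob : IsProbabilityMeasure ν := by
    rw [← hdens 0]
    exact Measure.isProbabilityMeasure_map (hXm 0).aemeasurable
  set G : Fin S → Fin S → ℝ := fun s t => ∫ x, h s x * h t x ∂ν with hGdef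
  have hGlb : ∀ c : Fin S → ℝ, (∑ s, c s ^ 2) ≤ ∑ s, ∑ t, c s * c t * G s t :=
    gram_lb f h u hmeas hbound horth hνprob
  have hGbd : ∀ s t, |G s t| ≤ u ^ 2 := by
    intro s t
    rw [hGdef]
    have habs : |∫ x, h s x * h t x ∂ν| ≤ ∫ x, |h s x * h t x| ∂ν := by
      simpa [Real.norm_eq_abs, ← abs_mul] using
        norm_integral_le_integral_norm (μ := ν) (fun x => h s x * h t x)
    calc |∫ x, h s x * h t x ∂ν| ≤ ∫ x, |h s x * h t x| ∂ν := habs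
      _ ≤ ∫ _x, u ^ 2 ∂ν := by
          refine integral_mono_of_nonneg (ae_of_all _ fun x => abs_nonneg _)
            (integrable_const _) (ae_of_all _ fun x => ?_)
          show |h s x * h t x| ≤ u ^ 2
          rw [abs_mul]
          have h1 := hbound s x; have h2 := hbound t x
          have h3 := abs_nonneg (h s x); have h4 := abs_nonneg (h t x)
          nlinarith
      _ = u ^ 2 := by simp
  have hu2 : 1 ≤ u ^ 2 := by
    have := hGlb (Pi.single ⟨0, hSpos⟩ 1)
    rw [Finset.sum_eq_single (⟨0, hSpos⟩ : Fin S)] at this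
    · rw [Finset.sum_eq_single (⟨0, hSpos⟩ : Fin S)] at this
      · rw [Finset.sum_eq_single (⟨0, hSpos⟩ : Fin S)] at this
        · simp only [Pi.single_eq_same, one_pow, one_mul] at this
          calc (1 : ℝ) ≤ G ⟨0, hSpos⟩ ⟨0, hSpos⟩ := this
            _ ≤ |G ⟨0, hSpos⟩ ⟨0, hSpos⟩| := le_abs_self _
            _ ≤ u ^ 2 := hGbd _ _
        · intro t _ hts; rw [Pi.single_eq_of_ne hts]; ring
        · intro hs; exact absurd (Finset.mem_univ _) hs
      · intro t _ hts; simp [Pi.single_eq_of_ne hts]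
      · intro hs; exact absurd (Finset.mem_univ _) hs
    · intro t _ hts; rw [Pi.single_eq_of_ne hts]; ring
    · intro hs; exact absurd (Finset.mem_univ _) hs
  set cB : ℝ := 2 * u ^ 2 with hcBdef
  have hcB : 0 < cB := by nlinarith
  set ε : ℝ := 1 / (2 * S) with hεdef
  have hεpos : 0 < ε := by
    rw [hεdef]
    have : (0:ℝ) < S := by exact_mod_cast hSpos
    positivity
  have hεc : ε ≤ 2 * cB := by
    have hS1 : (1:ℝ) ≤ S := by exact_mod_cast hSpos
    have : ε ≤ 1 / 2 := by
      rw [hεdef]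
      rw [div_le_div_iff₀ (by linarith) (by norm_num)]
      linarith
    nlinarith
  set α : ℝ := ε ^ 2 / (4 * cB ^ 2) with hαdef
  have hαpos : 0 < α := by positivity
  -- eventual bound
  have htend : Tendsto (fun N : ℕ => (N : ℝ) * ((S : ℝ) ^ 2 * (2 * Real.exp (-(α * N)))))
      atTop (nhds 0) := by
    have t1 : Tendsto (fun x : ℝ => x ^ 1 * Real.exp (-x)) atTop (nhds 0) :=
      Real.tendsto_pow_mul_exp_neg_atTop_nhds_zero 1
    have t2 : Tendsto (fun N : ℕ => α * (N : ℝ)) atTop atTop :=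
      (tendsto_natCast_atTop_atTop).const_mul_atTop hαpos
    have t3 : Tendsto (fun N : ℕ => (α * N) ^ 1 * Real.exp (-(α * N))) atTop (nhds 0) :=
      t1.comp t2
    have t4 : Tendsto (fun N : ℕ =>
        (2 * (S : ℝ) ^ 2 / α) * ((α * N) ^ 1 * Real.exp (-(α * N)))) atTop (nhds 0) := by
      simpa using t3.const_mul (2 * (S : ℝ) ^ 2 / α)
    refine t4.congr fun N => ?_
    field_simp
  have hev : ∀ᶠ N : ℕ in atTop,
      (N : ℝ) * ((S : ℝ) ^ 2 * (2 * Real.exp (-(α * N)))) < 1 := by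
    have := htend.eventually (eventually_lt_nhds (by norm_num : (0:ℝ) < 1))
    exact this
  filter_upwards [hev, eventually_ge_atTop 1] with N hN1 hN2
  -- per-pair deviation events
  set A1 : Fin S → Fin S → Set Ω := fun s t =>
    {ω | (N : ℝ) * ε ≤ ∑ i ∈ Finset.range N, (h s (X i ω) * h t (X i ω) - G s t)} with hA1def
  set A2 : Fin S → Fin S → Set Ω := fun s t =>
    {ω | (N : ℝ) * ε ≤ ∑ i ∈ Finset.range N, (G s t - h s (X i ω) * h t (X i ω))} with hA2def
  have hqmeas : ∀ s t : Fin S, Measurable (fun x : Fin D → ℝ => h s x * h t x) :=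
    fun s t => (hmeas s).mul (hmeas t)
  have hqbd : ∀ (s t : Fin S) x, |h s x * h t x| ≤ u ^ 2 := by
    intro s t x
    rw [abs_mul]
    have h1 := hbound s x; have h2 := hbound t x
    have h3 := abs_nonneg (h s x); have h4 := abs_nonneg (h t x)
    nlinarith
  have hmean : ∀ (s t : Fin S) (i : ℕ),
      ∫ ω, h s (X i ω) * h t (X i ω) ∂P = G s t := by
    intro s t i
    have := integral_map (μ := P) (f := fun x => h s x * h t x)
      (hXm i).aemeasurable (hqmeas s t).aestronglyMeasurable
    rw [hdens i] at this
    rw [← this, hGdef]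
  have hcompint : ∀ (s t : Fin S) (i : ℕ),
      Integrable (fun ω => h s (X i ω) * h t (X i ω)) P := by
    intro s t i
    refine (integrable_const (u ^ 2)).mono'
      ((hqmeas s t).comp (hXm i)).aestronglyMeasurable (ae_of_all _ fun ω => ?_)
    rw [Real.norm_eq_abs]; exact hqbd s t (X i ω)
  have hexpon : -(N : ℝ) * ε ^ 2 / (4 * cB ^ 2) = -(α * N) := by
    rw [hαdef]; field_simp
  have hA1P : ∀ s t : Fin S, P (A1 s t) ≤ ENNReal.ofReal (Real.exp (-(α * N))) := by
    intro s t
    have hch := chernoff_iid P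
      (Y := fun i ω => h s (X i ω) * h t (X i ω) - G s t)
      (hiid.comp (fun _ => fun x => h s x * h t x - G s t)
        (fun _ => (hqmeas s t).sub measurable_const))
      (fun i => ((hqmeas s t).comp (hXm i)).sub measurable_const)
      hcB
      (fun i ω => by
        have := hqbd s t (X i ω); have := hGbd s t
        rw [hcBdef]
        have := abs_sub_abs_le_abs_sub (h s (X i ω) * h t (X i ω)) (G s t)
        have h5 := abs_sub (h s (X i ω) * h t (X i ω)) (G s t)
        calc |h s (X i ω) * h t (X i ω) - G s t|
            ≤ |h s (X i ω) * h t (X i ω)| + |G s t| := abs_sub _ _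
          _ ≤ 2 * u ^ 2 := by
              have := hqbd s t (X i ω); have := hGbd s t; linarith)
      (fun i => by
        rw [integral_sub (hcompint s t i) (integrable_const _), hmean s t i]
        simp)
      hεpos.le hεc N
    rw [hexpon] at hch
    calc P (A1 s t) = ENNReal.ofReal ((P (A1 s t)).toReal) :=
          (ENNReal.ofReal_toReal (measure_ne_top P _)).symm
      _ ≤ ENNReal.ofReal (Real.exp (-(α * N))) := ENNReal.ofReal_le_ofReal hch
  have hA2P : ∀ s t : Fin S, P (A2 s t) ≤ ENNReal.ofReal (Real.exp (-(α * N))) := by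
    intro s t
    have hch := chernoff_iid P
      (Y := fun i ω => G s t - h s (X i ω) * h t (X i ω))
      (hiid.comp (fun _ => fun x => G s t - h s x * h t x)
        (fun _ => measurable_const.sub (hqmeas s t)))
      (fun i => measurable_const.sub ((hqmeas s t).comp (hXm i)))
      hcB
      (fun i ω => by
        rw [hcBdef]
        calc |G s t - h s (X i ω) * h t (X i ω)|
            ≤ |G s t| + |h s (X i ω) * h t (X i ω)| := abs_sub _ _
          _ ≤ 2 * u ^ 2 := by
              have := hqbd s t (X i ω); have := hGbd s t; linarith)
      (fun i => by
        rw [integral_sub (integrable_const _) (hcompint s t i), hmean s t i]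
        simp)
      hεpos.le hεc N
    rw [hexpon] at hch
    calc P (A2 s t) = ENNReal.ofReal ((P (A2 s t)).toReal) :=
          (ENNReal.ofReal_toReal (measure_ne_top P _)).symm
      _ ≤ ENNReal.ofReal (Real.exp (-(α * N))) := ENNReal.ofReal_le_ofReal hch
  set Bad : Set Ω := ⋃ s : Fin S, ⋃ t : Fin S, (A1 s t ∪ A2 s t) with hBaddef
  have hA1meas : ∀ s t : Fin S, MeasurableSet (A1 s t) := by
    intro s t
    exact measurableSet_le measurable_const
      (Finset.measurable_sum _ fun i _ =>
        (((hqmeas s t).comp (hXm i)).sub measurable_const))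
  have hA2meas : ∀ s t : Fin S, MeasurableSet (A2 s t) := by
    intro s t
    exact measurableSet_le measurable_const
      (Finset.measurable_sum _ fun i _ =>
        (measurable_const.sub ((hqmeas s t).comp (hXm i))))
  have hBadMeas : MeasurableSet Bad :=
    MeasurableSet.iUnion fun s => MeasurableSet.iUnion fun t =>
      (hA1meas s t).union (hA2meas s t)
  have hBadP : P Bad ≤ ENNReal.ofReal ((S : ℝ) ^ 2 * (2 * Real.exp (-(α * N)))) := by
    calc P Bad ≤ ∑ s : Fin S, P (⋃ t : Fin S, (A1 s t ∪ A2 s t)) := by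
          rw [hBaddef]
          refine (measure_iUnion_le _).trans_eq ?_
          exact tsum_fintype _
      _ ≤ ∑ s : Fin S, ∑ t : Fin S, P (A1 s t ∪ A2 s t) := by
          refine Finset.sum_le_sum fun s _ => ?_
          refine (measure_iUnion_le _).trans_eq ?_
          exact tsum_fintype _
      _ ≤ ∑ s : Fin S, ∑ t : Fin S,
            ENNReal.ofReal (2 * Real.exp (-(α * N))) := by
          refine Finset.sum_le_sum fun s _ => Finset.sum_le_sum fun t _ => ?_
          refine (measure_union_le _ _).trans ?_
          calc P (A1 s t) + P (A2 s t)
              ≤ ENNReal.ofReal (Real.exp (-(α * N))) + ENNReal.ofReal (Real.exp (-(α * N))) :=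
                add_le_add (hA1P s t) (hA2P s t)
            _ = ENNReal.ofReal (2 * Real.exp (-(α * N))) := by
                rw [← ENNReal.ofReal_add (Real.exp_pos _).le (Real.exp_pos _).le]
                congr 1; ring
      _ = ENNReal.ofReal ((S : ℝ) ^ 2 * (2 * Real.exp (-(α * N)))) := by
          rw [Finset.sum_const, Finset.sum_const, Finset.card_univ, Fintype.card_fin,
            smul_smul, nsmul_eq_mul]
          rw [← ENNReal.ofReal_natCast (S * S),
            ← ENNReal.ofReal_mul (by positivity)]
          congr 1
          push_cast
          ring
  -- on the complement, linear independence holds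
  have hsub : Badᶜ ⊆ {ω | LinearIndependent ℝ (fun s : Fin S => fun i : Fin N => h s (X i ω))} := by
    intro ω hω
    simp only [hBaddef, Set.compl_iUnion, Set.mem_iInter, Set.mem_compl_iff,
      Set.mem_union, not_or] at hω
    have hdev : ∀ s t : Fin S,
        |(∑ i ∈ Finset.range N, h s (X i ω) * h t (X i ω)) - (N : ℝ) * G s t|
          < (N : ℝ) * ε := by
      intro s t
      obtain ⟨h1, h2⟩ := hω s t
      rw [hA1def] at h1; rw [hA2def] at h2
      simp only [Set.mem_setOf_eq, not_le] at h1 h2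
      rw [Finset.sum_sub_distrib, Finset.sum_const, Finset.card_range,
        nsmul_eq_mul] at h1
      rw [Finset.sum_sub_distrib, Finset.sum_const, Finset.card_range,
        nsmul_eq_mul] at h2
      rw [abs_lt]
      constructor <;> linarith
    rw [Set.mem_setOf_eq]
    rw [Fintype.linearIndependent_iff]
    intro g hg
    have hcoord : ∀ i : Fin N, ∑ s : Fin S, g s * h s (X (i : ℕ) ω) = 0 := by
      intro i
      have := congrFun hg i
      simpa [Finset.sum_apply, smul_eq_mul] using this
    set T : Fin S → Fin S → ℝ :=
      fun s t => ∑ i ∈ Finset.range N, h s (X i ω) * h t (X i ω) with hTdef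
    have hzero : ∑ s : Fin S, ∑ t : Fin S, g s * g t * T s t = 0 := by
      have e1 : ∀ i : ℕ, i ∈ Finset.range N →
          (∑ s : Fin S, g s * h s (X i ω)) ^ 2 = 0 := by
        intro i hi
        rw [hcoord ⟨i, Finset.mem_range.1 hi⟩]
        simp
      have e3 : ∀ s t : Fin S, g s * g t * T s t
          = ∑ i ∈ Finset.range N, g s * h s (X i ω) * (g t * h t (X i ω)) := by
        intro s t
        simp only [hTdef]
        rw [Finset.mul_sum]
        exact Finset.sum_congr rfl fun i _ => by ring
      calc ∑ s : Fin S, ∑ t : Fin S, g s * g t * T s t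
          = ∑ s : Fin S, ∑ t : Fin S, ∑ i ∈ Finset.range N,
              g s * h s (X i ω) * (g t * h t (X i ω)) :=
            Finset.sum_congr rfl fun s _ => Finset.sum_congr rfl fun t _ => e3 s t
        _ = ∑ s : Fin S, ∑ i ∈ Finset.range N, ∑ t : Fin S,
              g s * h s (X i ω) * (g t * h t (X i ω)) :=
            Finset.sum_congr rfl fun s _ => Finset.sum_comm
        _ = ∑ i ∈ Finset.range N, ∑ s : Fin S, ∑ t : Fin S,
              g s * h s (X i ω) * (g t * h t (X i ω)) := Finset.sum_comm
        _ = ∑ i ∈ Finset.range N, (∑ s : Fin S, g s * h s (X i ω)) ^ 2 := by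
            refine Finset.sum_congr rfl fun i _ => ?_
            rw [sq, Finset.sum_mul_sum]
        _ = 0 := Finset.sum_eq_zero e1
    have hG2 : (N : ℝ) * ∑ s : Fin S, g s ^ 2
        ≤ ∑ s : Fin S, ∑ t : Fin S, g s * g t * ((N : ℝ) * G s t) := by
      have := hGlb g
      calc (N : ℝ) * ∑ s : Fin S, g s ^ 2
          ≤ (N : ℝ) * ∑ s : Fin S, ∑ t : Fin S, g s * g t * G s t := by
            have hN0 : (0:ℝ) ≤ N := Nat.cast_nonneg N
            nlinarith
        _ = ∑ s : Fin S, ∑ t : Fin S, g s * g t * ((N : ℝ) * G s t) := by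
            rw [Finset.mul_sum]
            refine Finset.sum_congr rfl fun s _ => ?_
            rw [Finset.mul_sum]
            exact Finset.sum_congr rfl fun t _ => by ring
    have hDev : |∑ s : Fin S, ∑ t : Fin S, g s * g t * (T s t - (N : ℝ) * G s t)|
        ≤ (∑ s : Fin S, |g s|) ^ 2 * ((N : ℝ) * ε) := by
      calc |∑ s : Fin S, ∑ t : Fin S, g s * g t * (T s t - (N : ℝ) * G s t)|
          ≤ ∑ s : Fin S, |∑ t : Fin S, g s * g t * (T s t - (N : ℝ) * G s t)| :=
            Finset.abs_sum_le_sum_abs _ _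
        _ ≤ ∑ s : Fin S, ∑ t : Fin S, |g s * g t * (T s t - (N : ℝ) * G s t)| :=
            Finset.sum_le_sum fun s _ => Finset.abs_sum_le_sum_abs _ _
        _ ≤ ∑ s : Fin S, ∑ t : Fin S, |g s| * |g t| * ((N : ℝ) * ε) := by
            refine Finset.sum_le_sum fun s _ => Finset.sum_le_sum fun t _ => ?_
            rw [abs_mul, abs_mul]
            refine mul_le_mul_of_nonneg_left (hdev s t).le ?_
            positivity
        _ = (∑ s : Fin S, |g s|) ^ 2 * ((N : ℝ) * ε) := by
            rw [sq, Finset.sum_mul_sum, Finset.sum_mul]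
            refine Finset.sum_congr rfl fun s _ => ?_
            rw [Finset.sum_mul]
    have hCS : (∑ s : Fin S, |g s|) ^ 2 ≤ (S : ℝ) * ∑ s : Fin S, g s ^ 2 := by
      have := sq_sum_le_card_mul_sum_sq (s := (Finset.univ : Finset (Fin S)))
        (f := fun s => |g s|)
      simpa [sq_abs, Finset.card_univ] using this
    have hsplit : ∑ s : Fin S, ∑ t : Fin S, g s * g t * T s t
        = (∑ s : Fin S, ∑ t : Fin S, g s * g t * ((N : ℝ) * G s t))
          + ∑ s : Fin S, ∑ t : Fin S, g s * g t * (T s t - (N : ℝ) * G s t) := by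
      rw [← Finset.sum_add_distrib]
      refine Finset.sum_congr rfl fun s _ => ?_
      rw [← Finset.sum_add_distrib]
      exact Finset.sum_congr rfl fun t _ => by ring
    have hεS : ε * (S : ℝ) = 1 / 2 := by
      rw [hεdef]
      have hS0 : (S : ℝ) ≠ 0 := by
        exact_mod_cast hSpos.ne'
      field_simp
    have hsum_nonneg : 0 ≤ ∑ s : Fin S, g s ^ 2 :=
      Finset.sum_nonneg fun s _ => sq_nonneg _
    have hN1' : (1 : ℝ) ≤ (N : ℝ) := by exact_mod_cast hN2
    have hfinal : ∑ s : Fin S, g s ^ 2 ≤ 0 := by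
      have hd := (abs_le.1 hDev).1
      have key : (N : ℝ) * ∑ s : Fin S, g s ^ 2
          ≤ (∑ s : Fin S, |g s|) ^ 2 * ((N : ℝ) * ε) := by
        calc (N : ℝ) * ∑ s : Fin S, g s ^ 2
            ≤ ∑ s : Fin S, ∑ t : Fin S, g s * g t * ((N : ℝ) * G s t) := hG2
          _ = - ∑ s : Fin S, ∑ t : Fin S, g s * g t * (T s t - (N : ℝ) * G s t) := by
              have := hsplit
              rw [hzero] at this
              linarith
          _ ≤ (∑ s : Fin S, |g s|) ^ 2 * ((N : ℝ) * ε) := by linarith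
      have key2 : (N : ℝ) * ∑ s : Fin S, g s ^ 2
          ≤ ((S : ℝ) * ∑ s : Fin S, g s ^ 2) * ((N : ℝ) * ε) := by
        refine key.trans (mul_le_mul_of_nonneg_right hCS ?_)
        positivity
      have key3 : ((S : ℝ) * ∑ s : Fin S, g s ^ 2) * ((N : ℝ) * ε)
          = (N : ℝ) * ((1:ℝ)/2) * ∑ s : Fin S, g s ^ 2 := by
        have : (S : ℝ) * ε = 1 / 2 := by rw [mul_comm]; exact hεS
        calc ((S : ℝ) * ∑ s : Fin S, g s ^ 2) * ((N : ℝ) * ε)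
            = (N : ℝ) * ((S:ℝ) * ε) * ∑ s : Fin S, g s ^ 2 := by ring
          _ = (N : ℝ) * ((1:ℝ)/2) * ∑ s : Fin S, g s ^ 2 := by rw [this]
      rw [key3] at key2
      nlinarith
    intro s
    have hsumzero : ∑ t : Fin S, g t ^ 2 = 0 := le_antisymm hfinal hsum_nonneg
    have hall := (Finset.sum_eq_zero_iff_of_nonneg
      (fun t _ => sq_nonneg (g t))).1 hsumzero s (Finset.mem_univ s)
    exact pow_eq_zero_iff (by norm_num) |>.1 hall
  -- final arithmetic
  set r : ℝ := (S : ℝ) ^ 2 * (2 * Real.exp (-(α * N))) with hrdef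
  have hr0 : 0 ≤ r := by positivity
  have hN0 : (0:ℝ) < N := by exact_mod_cast hN2
  have hrN : r < 1 / (N : ℝ) := by
    rw [lt_div_iff₀ hN0]
    calc r * N = (N:ℝ) * r := by ring
      _ < 1 := hN1
  have h1N : 1 / (N : ℝ) ≤ 1 := by
    rw [div_le_one hN0]
    exact_mod_cast hN2
  calc ENNReal.ofReal (1 - 1 / (N : ℝ)) < ENNReal.ofReal (1 - r) := by
        rw [ENNReal.ofReal_lt_ofReal_iff (by linarith)]
        linarith
    _ = 1 - ENNReal.ofReal r := by
        rw [ENNReal.ofReal_sub _ hr0, ENNReal.ofReal_one]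
    _ ≤ 1 - P Bad := by
        exact tsub_le_tsub_left hBadP 1
    _ = P Badᶜ := by
        rw [measure_compl hBadMeas (measure_ne_top P _), measure_univ]
    _ ≤ P {ω | LinearIndependent ℝ (fun s : Fin S => fun i : Fin N => h s (X i ω))} :=
        measure_mono hsub

end
end

section
/- Suppose E[Y_i(z)|X_i] = X_{i1} + ⋯ + X_{iD} + z_1 + ⋯ + z_K (the simple additive working model). Then for any weights w_1,…,w_N and any nonempty 𝒦 ⊆ {1,…,K}, the conditional bias decomposes as E[τ̂⁺_𝒦 − τ⁺_N,𝒦 | X, Z] = Σ_{d=1}^D ( N^{-1} Σ_i w_i A⁺_{i𝒦} X_{id} − N^{-1} Σ_i X_{id} ) + Σ_{k=1}^K ( N^{-1} Σ_i w_i A⁺_{i𝒦} Z_{ik} − 2^{−(K−1)} Σ_{z∈Z} g⁺_{𝒦z} z_k ), where τ̂⁺_𝒦 = N^{-1} Σ_i w_i A⁺_{i𝒦} Y_i^obs and τ⁺_N,𝒦 = 2^{−(K−1)} Σ_{z∈Z} g⁺_{𝒦z} N^{-1} Σ_i Y_i(z); the analogous identity holds with A⁻ and g⁻. -/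
open MeasureTheory ProbabilityTheory Filter Finset BoundedContinuousFunction
open scoped NNReal ENNReal

noncomputable section

lemma sgn_not (b : Bool) : sgn (!b) = -sgn b := by cases b <;> simp [sgn]

lemma sum_contrast_zero {K : ℕ} (𝒦 : Finset (Fin K)) (h𝒦 : 𝒦.Nonempty) :
    ∑ z : Fin K → Bool, contrastG 𝒦 z = 0 := by
  obtain ⟨k₀, hk₀⟩ := h𝒦
  have hinv : Function.Involutive (fun z : Fin K → Bool => Function.update z k₀ (!z k₀)) := by
    intro z
    funext k
    by_cases h : k = k₀ <;> simp [Function.update, h]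
  have hflip : ∀ z : Fin K → Bool,
      contrastG 𝒦 (Function.update z k₀ (!z k₀)) = -contrastG 𝒦 z := by
    intro z
    unfold contrastG
    have h1 : (fun k => sgn (Function.update z k₀ (!z k₀) k))
        = Function.update (fun k => sgn (z k)) k₀ (-sgn (z k₀)) := by
      funext k
      by_cases h : k = k₀ <;> simp [Function.update, h, sgn_not]
    calc ∏ k ∈ 𝒦, sgn (Function.update z k₀ (!z k₀) k)
        = ∏ k ∈ 𝒦, Function.update (fun k => sgn (z k)) k₀ (-sgn (z k₀)) k := by rw [h1]
      _ = -sgn (z k₀) * ∏ k ∈ (𝒦 \ {k₀}), sgn (z k) := Finset.prod_update_of_mem hk₀ _ _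
      _ = -(sgn (z k₀) * ∏ k ∈ (𝒦 \ {k₀}), sgn (z k)) := by ring
      _ = -∏ k ∈ 𝒦, sgn (z k) := by rw [← Finset.erase_eq, Finset.mul_prod_erase 𝒦 (fun k => sgn (z k)) hk₀]
  have : (2:ℝ) * ∑ z : Fin K → Bool, contrastG 𝒦 z = 0 := by
    have h2 : ∑ z : Fin K → Bool, (contrastG 𝒦 z
        + contrastG 𝒦 (Function.update z k₀ (!z k₀))) = 0 := by
      rw [Finset.sum_congr rfl (fun z _ => by rw [hflip z])]
      simp
    rw [Finset.sum_add_distrib] at h2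
    rw [show ∑ z : Fin K → Bool, contrastG 𝒦 (Function.update z k₀ (!z k₀))
        = ∑ z : Fin K → Bool, contrastG 𝒦 z from
      Equiv.sum_comp (Function.Involutive.toPerm _ hinv) (contrastG 𝒦)] at h2
    linarith
  linarith


lemma contrast_pm {K : ℕ} (𝒦 : Finset (Fin K)) (z : Fin K → Bool) :
    contrastG 𝒦 z = 1 ∨ contrastG 𝒦 z = -1 := by
  have : contrastG 𝒦 z ^ 2 = 1 := by
    unfold contrastG
    rw [← Finset.prod_pow]
    apply Finset.prod_eq_one
    intro k _
    cases z k <;> norm_num [sgn]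
  rcases mul_self_eq_one_iff.mp (show contrastG 𝒦 z * contrastG 𝒦 z = 1 by nlinarith [this]) with h | h
  · exact Or.inl h
  · exact Or.inr h

lemma gpos_add_gneg {K : ℕ} (𝒦 : Finset (Fin K)) (z : Fin K → Bool) :
    gpos 𝒦 z + gneg 𝒦 z = 1 := by
  rcases contrast_pm 𝒦 z with h | h <;> simp [gpos, gneg, h]
lemma gpos_sub_gneg {K : ℕ} (𝒦 : Finset (Fin K)) (z : Fin K → Bool) :
    gpos 𝒦 z - gneg 𝒦 z = contrastG 𝒦 z := by
  rcases contrast_pm 𝒦 z with h | h <;> simp [gpos, gneg, h]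

lemma sum_gpos {K : ℕ} (hK : 1 ≤ K) (𝒦 : Finset (Fin K)) (h𝒦 : 𝒦.Nonempty) :
    ∑ z : Fin K → Bool, gpos 𝒦 z = 2 ^ (K - 1) := by
  have h1 : ∑ z : Fin K → Bool, (gpos 𝒦 z + gneg 𝒦 z) = 2 ^ K := by
    simp [gpos_add_gneg, Fintype.card_fun]
  have h2 : ∑ z : Fin K → Bool, (gpos 𝒦 z - gneg 𝒦 z) = 0 := by
    simp only [gpos_sub_gneg]; exact sum_contrast_zero 𝒦 h𝒦
  rw [Finset.sum_add_distrib] at h1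
  rw [Finset.sum_sub_distrib] at h2
  have hpow : (2:ℝ) ^ K = 2 * 2 ^ (K - 1) := by
    rw [← pow_succ']
    congr 1
    omega
  linarith

lemma sum_gneg {K : ℕ} (hK : 1 ≤ K) (𝒦 : Finset (Fin K)) (h𝒦 : 𝒦.Nonempty) :
    ∑ z : Fin K → Bool, gneg 𝒦 z = 2 ^ (K - 1) := by
  have h1 : ∑ z : Fin K → Bool, (gpos 𝒦 z + gneg 𝒦 z) = 2 ^ K := by
    simp [gpos_add_gneg, Fintype.card_fun]
  have h2 : ∑ z : Fin K → Bool, (gpos 𝒦 z - gneg 𝒦 z) = 0 := by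
    simp only [gpos_sub_gneg]; exact sum_contrast_zero 𝒦 h𝒦
  rw [Finset.sum_add_distrib] at h1
  rw [Finset.sum_sub_distrib] at h2
  have hpow : (2:ℝ) ^ K = 2 * 2 ^ (K - 1) := by
    rw [← pow_succ']
    congr 1
    omega
  linarith

lemma main_aux {K D N : ℕ} (hN : (N:ℝ) ≠ 0)
    (g : (Fin K → Bool) → ℝ) (hg : ∑ z : Fin K → Bool, g z = (2:ℝ) ^ (K - 1))
    (W : Fin N → ℝ) (X : Fin N → Fin D → ℝ) (Zv : Fin N → (Fin K → Bool)) :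
    (N : ℝ)⁻¹ * (∑ i, W i * ((∑ d, X i d) + ∑ k, sgn (Zv i k)))
        - (2 ^ (K - 1) : ℝ)⁻¹ * ((N : ℝ)⁻¹ *
            ∑ i, ∑ z : Fin K → Bool, g z * ((∑ d, X i d) + ∑ k, sgn (z k)))
      = (∑ d, ((N : ℝ)⁻¹ * (∑ i, W i * X i d) - (N : ℝ)⁻¹ * ∑ i, X i d))
        + ∑ k, ((N : ℝ)⁻¹ * (∑ i, W i * sgn (Zv i k))
            - (2 ^ (K - 1) : ℝ)⁻¹ * ∑ z : Fin K → Bool, g z * sgn (z k)) := by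
  have hc : (2:ℝ) ^ (K - 1) ≠ 0 := by positivity
  set c : ℝ := (2:ℝ) ^ (K - 1) with hcdef
  set T : ℝ := ∑ z : Fin K → Bool, g z * ∑ k, sgn (z k) with hT
  have e1 : ∑ i, W i * ((∑ d, X i d) + ∑ k, sgn (Zv i k))
      = (∑ d, ∑ i, W i * X i d) + ∑ k, ∑ i, W i * sgn (Zv i k) := by
    simp only [mul_add, Finset.mul_sum]
    rw [Finset.sum_add_distrib]
    congr 1
    · exact Finset.sum_comm ..
    · exact Finset.sum_comm ..
  have e2 : ∑ i, ∑ z : Fin K → Bool, g z * ((∑ d, X i d) + ∑ k, sgn (z k))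
      = c * (∑ i, ∑ d, X i d) + (N : ℝ) * T := by
    have inner : ∀ i, ∑ z : Fin K → Bool, g z * ((∑ d, X i d) + ∑ k, sgn (z k))
        = c * (∑ d, X i d) + T := by
      intro i
      rw [show ∑ z : Fin K → Bool, g z * ((∑ d, X i d) + ∑ k, sgn (z k))
          = (∑ z : Fin K → Bool, g z * (∑ d, X i d))
            + ∑ z : Fin K → Bool, g z * ∑ k, sgn (z k) from by
        rw [← Finset.sum_add_distrib]; exact Finset.sum_congr rfl fun z _ => by ring]
      rw [← Finset.sum_mul, hg]
    rw [Finset.sum_congr rfl fun i _ => inner i, Finset.sum_add_distrib,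
      ← Finset.mul_sum, Finset.sum_const, Finset.card_univ, Fintype.card_fin,
      nsmul_eq_mul]
  have e3 : ∑ k, ∑ z : Fin K → Bool, g z * sgn (z k) = T := by
    rw [hT, Finset.sum_comm]
    exact Finset.sum_congr rfl fun z _ => by rw [Finset.mul_sum]
  rw [e1, e2, Finset.sum_sub_distrib, Finset.sum_sub_distrib]
  simp only [← Finset.mul_sum]
  rw [e3, show (∑ d, ∑ i, X i d : ℝ) = ∑ i, ∑ d, X i d from Finset.sum_comm ..]
  field_simp
  ring

/-- Under the simple additive working model
`E[Y_i(z)|X_i] = X_{i1} + ⋯ + X_{iD} + z_1 + ⋯ + z_K`, the conditional bias of the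
weighting estimator (conditional expectation given `X, Z`, which replaces each `Y_i(z)`
by `E[Y_i(z)|X_i]`) decomposes into a covariate-imbalance part and a
factor-imbalance part, for both the positive and the negative part of the contrast. -/
theorem statement12 (K D N : ℕ) (hK : 2 ≤ K) (hN : 0 < N)
    (𝒦 : Finset (Fin K)) (h𝒦 : 𝒦.Nonempty)
    (X : Fin N → Fin D → ℝ) (Zv : Fin N → (Fin K → Bool)) (w : Fin N → ℝ) :
    ((N : ℝ)⁻¹ * (∑ i, w i * Apos 𝒦 (Zv i) * ((∑ d, X i d) + ∑ k, sgn (Zv i k)))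
        - (2 ^ (K - 1) : ℝ)⁻¹ * ((N : ℝ)⁻¹ *
            ∑ i, ∑ z : Fin K → Bool, gpos 𝒦 z * ((∑ d, X i d) + ∑ k, sgn (z k)))
      = (∑ d, ((N : ℝ)⁻¹ * (∑ i, w i * Apos 𝒦 (Zv i) * X i d)
            - (N : ℝ)⁻¹ * ∑ i, X i d))
        + ∑ k, ((N : ℝ)⁻¹ * (∑ i, w i * Apos 𝒦 (Zv i) * sgn (Zv i k))
            - (2 ^ (K - 1) : ℝ)⁻¹ * ∑ z : Fin K → Bool, gpos 𝒦 z * sgn (z k))) ∧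
    ((N : ℝ)⁻¹ * (∑ i, w i * Aneg 𝒦 (Zv i) * ((∑ d, X i d) + ∑ k, sgn (Zv i k)))
        - (2 ^ (K - 1) : ℝ)⁻¹ * ((N : ℝ)⁻¹ *
            ∑ i, ∑ z : Fin K → Bool, gneg 𝒦 z * ((∑ d, X i d) + ∑ k, sgn (z k)))
      = (∑ d, ((N : ℝ)⁻¹ * (∑ i, w i * Aneg 𝒦 (Zv i) * X i d)
            - (N : ℝ)⁻¹ * ∑ i, X i d))
        + ∑ k, ((N : ℝ)⁻¹ * (∑ i, w i * Aneg 𝒦 (Zv i) * sgn (Zv i k))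
            - (2 ^ (K - 1) : ℝ)⁻¹ * ∑ z : Fin K → Bool, gneg 𝒦 z * sgn (z k))) := by
  have hN' : (N : ℝ) ≠ 0 := Nat.cast_ne_zero.mpr hN.ne'
  have hK1 : 1 ≤ K := le_trans (by norm_num) hK
  constructor
  · exact main_aux hN' (gpos 𝒦) (sum_gpos hK1 𝒦 h𝒦) (fun i => w i * Apos 𝒦 (Zv i)) X Zv
  · exact main_aux hN' (gneg 𝒦) (sum_gneg hK1 𝒦 h𝒦) (fun i => w i * Aneg 𝒦 (Zv i)) X Zv

end
end

section
/- Suppose E[Y_i(z)|X_i] = α^T q(X_i, z) for some coefficient vector α, where q(x,z) = (h_s(x) ∏_{j∈J} z_j)_{s=1,…,S, J∈[K]_{K'}}. If the weights w_1,…,w_N satisfy the exact balance constraints Σ_i w_i A⁺_{i𝒦} q(X_i, Z_i) = 2^{−(K−1)} Σ_{z∈Z} g⁺_{𝒦z} Σ_i q(X_i, z), then N^{-1} Σ_i w_i A⁺_{i𝒦} E[Y_i(Z_i)|X_i] = 2^{−(K−1)} N^{-1} Σ_i Σ_{z∈Z} g⁺_{𝒦z} E[Y_i(z)|X_i]; i.e.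 the conditional bias E[τ̂⁺_𝒦 − τ⁺_N,𝒦 | X, Z] equals N^{-1} α^T [ Σ_i w_i A⁺_{i𝒦} q(X_i,Z_i) − 2^{−(K−1)} Σ_{z∈Z} g⁺_{𝒦z} Σ_i q(X_i,z) ] and vanishes under exact balance, and the analogous statement holds for the negative part with A⁻ and g⁻. -/
open MeasureTheory ProbabilityTheory Filter Finset BoundedContinuousFunction
open scoped NNReal ENNReal

noncomputable section

lemma tri {a b c : Type*} [Fintype a] [Fintype b] [Fintype c] (f : a → b → c → ℝ) :
    ∑ x : a, ∑ y : b, ∑ z : c, f x y z = ∑ z : c, ∑ y : b, ∑ x : a, f x y z :=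
  calc ∑ x : a, ∑ y : b, ∑ z : c, f x y z
      = ∑ x : a, ∑ z : c, ∑ y : b, f x y z := Finset.sum_congr rfl fun _ _ => Finset.sum_comm
    _ = ∑ z : c, ∑ x : a, ∑ y : b, f x y z := Finset.sum_comm
    _ = ∑ z : c, ∑ y : b, ∑ x : a, f x y z := Finset.sum_congr rfl fun _ _ => Finset.sum_comm

lemma key {ι ζ ν : Type*} [Fintype ι] [Fintype ζ] [Fintype ν]
    (α : ι → ℝ) (c Ninv : ℝ) (A w : ν → ℝ) (g : ζ → ℝ)
    (Q : ν → ι → ℝ) (R : ν → ζ → ι → ℝ) :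
    Ninv * (∑ i, w i * A i * (∑ p, α p * Q i p))
      - c * (Ninv * ∑ i, ∑ z, g z * (∑ p, α p * R i z p))
    = Ninv * ∑ p, α p * ((∑ i, w i * A i * Q i p) - c * ∑ z, g z * ∑ i, R i z p) := by
  have h1 : ∑ p, α p * ∑ i, w i * A i * Q i p = ∑ i, w i * A i * ∑ p, α p * Q i p := by
    simp only [Finset.mul_sum]
    rw [Finset.sum_comm]
    exact sum_congr rfl fun i _ => sum_congr rfl fun p _ => by ring
  have h2 : ∑ p, α p * (c * ∑ z, g z * ∑ i, R i z p)
      = c * ∑ i, ∑ z, g z * ∑ p, α p * R i z p := by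
    simp only [Finset.mul_sum]
    rw [tri (fun p z i => α p * (c * (g z * R i z p)))]
    exact sum_congr rfl fun i _ => sum_congr rfl fun z _ => sum_congr rfl fun p _ => by ring
  simp only [mul_sub, Finset.sum_sub_distrib, h1, h2]
  ring

/-- Under the linear outcome model `E[Y_i(z)|X_i] = αᵀ q(X_i, z)`,
the conditional bias of the weighting estimator equals
`N⁻¹ αᵀ [ ∑ᵢ wᵢ A⁺ᵢ𝒦 q(Xᵢ,Zᵢ) − 2^{−(K−1)} ∑_z g⁺𝒦z ∑ᵢ q(Xᵢ,z) ]`, and under exact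
balance for the positive part the weighted conditional means match; likewise with
the negative part. -/
theorem statement13 (K K' S D N : ℕ) (hK : 2 ≤ K)
    (𝒦 : Finset (Fin K)) (h𝒦 : 𝒦.Nonempty)
    (h : Fin S → (Fin D → ℝ) → ℝ) (α : qIndex K K' S → ℝ)
    (X : Fin N → Fin D → ℝ) (Zv : Fin N → (Fin K → Bool)) (w : Fin N → ℝ) :
    -- (a⁺): the conditional bias identity for the positive part
    ((N : ℝ)⁻¹ * (∑ i, w i * Apos 𝒦 (Zv i) * dotP α (qvec K' h (X i) (Zv i)))
        - (2 ^ (K - 1) : ℝ)⁻¹ * ((N : ℝ)⁻¹ *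
            ∑ i, ∑ z : Fin K → Bool, gpos 𝒦 z * dotP α (qvec K' h (X i) z))
      = (N : ℝ)⁻¹ * ∑ p : qIndex K K' S, α p *
          ((∑ i, w i * Apos 𝒦 (Zv i) * qvec K' h (X i) (Zv i) p)
            - (2 ^ (K - 1) : ℝ)⁻¹ * ∑ z : Fin K → Bool, gpos 𝒦 z * ∑ i, qvec K' h (X i) z p)) ∧
    -- (b⁺): under exact balance the positive-part bias vanishes
    ((∀ p : qIndex K K' S,
        ∑ i, w i * Apos 𝒦 (Zv i) * qvec K' h (X i) (Zv i) p
          = (2 ^ (K - 1) : ℝ)⁻¹ * ∑ z : Fin K → Bool, gpos 𝒦 z * ∑ i, qvec K' h (X i) z p) →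
      (N : ℝ)⁻¹ * (∑ i, w i * Apos 𝒦 (Zv i) * dotP α (qvec K' h (X i) (Zv i)))
        = (2 ^ (K - 1) : ℝ)⁻¹ * ((N : ℝ)⁻¹ *
            ∑ i, ∑ z : Fin K → Bool, gpos 𝒦 z * dotP α (qvec K' h (X i) z))) ∧
    -- (a⁻): the conditional bias identity for the negative part
    ((N : ℝ)⁻¹ * (∑ i, w i * Aneg 𝒦 (Zv i) * dotP α (qvec K' h (X i) (Zv i)))
        - (2 ^ (K - 1) : ℝ)⁻¹ * ((N : ℝ)⁻¹ *
            ∑ i, ∑ z : Fin K → Bool, gneg 𝒦 z * dotP α (qvec K' h (X i) z))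
      = (N : ℝ)⁻¹ * ∑ p : qIndex K K' S, α p *
          ((∑ i, w i * Aneg 𝒦 (Zv i) * qvec K' h (X i) (Zv i) p)
            - (2 ^ (K - 1) : ℝ)⁻¹ * ∑ z : Fin K → Bool, gneg 𝒦 z * ∑ i, qvec K' h (X i) z p)) ∧
    -- (b⁻): under exact balance the negative-part bias vanishes
    ((∀ p : qIndex K K' S,
        ∑ i, w i * Aneg 𝒦 (Zv i) * qvec K' h (X i) (Zv i) p
          = (2 ^ (K - 1) : ℝ)⁻¹ * ∑ z : Fin K → Bool, gneg 𝒦 z * ∑ i, qvec K' h (X i) z p) →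
      (N : ℝ)⁻¹ * (∑ i, w i * Aneg 𝒦 (Zv i) * dotP α (qvec K' h (X i) (Zv i)))
        = (2 ^ (K - 1) : ℝ)⁻¹ * ((N : ℝ)⁻¹ *
            ∑ i, ∑ z : Fin K → Bool, gneg 𝒦 z * dotP α (qvec K' h (X i) z))) := by
  have hpa := key α ((2:ℝ) ^ (K-1))⁻¹ (N:ℝ)⁻¹ (fun i => Apos 𝒦 (Zv i)) w
    (fun z => gpos 𝒦 z) (fun i p => qvec K' h (X i) (Zv i) p) (fun i z p => qvec K' h (X i) z p)
  have hna := key α ((2:ℝ) ^ (K-1))⁻¹ (N:ℝ)⁻¹ (fun i => Aneg 𝒦 (Zv i)) w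
    (fun z => gneg 𝒦 z) (fun i p => qvec K' h (X i) (Zv i) p) (fun i z p => qvec K' h (X i) z p)
  simp only [dotP]
  refine ⟨hpa, fun hb => ?_, hna, fun hb => ?_⟩
  · have h0 : ∑ p : qIndex K K' S, α p *
        ((∑ i, w i * Apos 𝒦 (Zv i) * qvec K' h (X i) (Zv i) p)
          - (2 ^ (K - 1) : ℝ)⁻¹ * ∑ z : Fin K → Bool, gpos 𝒦 z * ∑ i, qvec K' h (X i) z p) = 0 := by
      simp [hb]
    rw [h0, mul_zero] at hpa
    linarith
  · have h0 : ∑ p : qIndex K K' S, α p *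
        ((∑ i, w i * Aneg 𝒦 (Zv i) * qvec K' h (X i) (Zv i) p)
          - (2 ^ (K - 1) : ℝ)⁻¹ * ∑ z : Fin K → Bool, gneg 𝒦 z * ∑ i, qvec K' h (X i) z p) = 0 := by
      simp [hb]
    rw [h0, mul_zero] at hna
    linarith


end
end

section
/- Suppose the weights w_1,…,w_N satisfy the exact balance constraints Σ_i w_i A⁺_{i𝒦} q(X_i,Z_i) = 2^{−(K−1)} Σ_{z∈Z} g⁺_{𝒦z} Σ_i q(X_i,z) and Σ_i w_i A⁻_{i𝒦} q(X_i,Z_i) = 2^{−(K−1)} Σ_{z∈Z} g⁻_{𝒦z} Σ_i q(X_i,z) for all 𝒦 ∈ [K]_{K'}. Then for any fixed regression coefficient vector α̂_reg, the augmented estimator equals the plain weighting estimator: τ̂⁺_{𝒦,Aug} := N^{-1} Σ_i w_i A⁺_{i𝒦} (Y_i^obs − α̂_reg^T q(X_i,Z_i)) + 2^{−(K−1)} N^{-1} Σ_{z∈Z} g⁺_{𝒦z} α̂_reg^T Σ_i q(X_i,z) equals τ̂⁺_𝒦 = N^{-1} Σ_i w_i A⁺_{i𝒦} Y_i^obs,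 and likewise τ̂⁻_{𝒦,Aug} = τ̂⁻_𝒦; hence τ̂_{𝒦,Aug} = τ̂_𝒦. -/
open MeasureTheory ProbabilityTheory Filter Finset BoundedContinuousFunction
open scoped NNReal ENNReal

noncomputable section

lemma key_lemma {ι κ : Type*} [Fintype ι] [Fintype κ] {n : ℕ} (c : ℝ)
    (wA : Fin n → ℝ) (g : κ → ℝ) (q : Fin n → ι → ℝ) (Q : κ → ι → ℝ) (α : ι → ℝ)
    (hbal : ∀ p, ∑ i, wA i * q i p = c * ∑ z, g z * Q z p) :
    ∑ i, wA i * dotP α (q i) = c * ∑ z, g z * dotP α (Q z) := by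
  simp only [dotP, Finset.mul_sum]
  rw [Finset.sum_comm]
  rw [show (∑ z : κ, ∑ p, c * (g z * (α p * Q z p))) = ∑ p, ∑ z : κ, c * (g z * (α p * Q z p))
    from Finset.sum_comm]
  refine Finset.sum_congr rfl fun p _ => ?_
  have := hbal p
  calc ∑ i, wA i * (α p * q i p) = α p * ∑ i, wA i * q i p := by
        rw [Finset.mul_sum]; exact Finset.sum_congr rfl fun i _ => by ring
    _ = α p * (c * ∑ z, g z * Q z p) := by rw [this]
    _ = ∑ z : κ, c * (g z * (α p * Q z p)) := by
        rw [Finset.mul_sum, Finset.mul_sum]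
        exact Finset.sum_congr rfl fun z _ => by ring

/-- Under exact balance constraints for all `𝒦 ∈ [K]_{K'}` (both the
positive and negative part of each contrast), the augmented (regression-adjusted)
weighting estimator coincides with the plain weighting estimator, for any fixed
regression coefficient vector `α̂_reg`. -/
theorem statement14 (K K' S D N : ℕ) (hK : 2 ≤ K)
    (h : Fin S → (Fin D → ℝ) → ℝ)
    (X : Fin N → Fin D → ℝ) (Zv : Fin N → (Fin K → Bool))
    (Yobs : Fin N → ℝ) (w : Fin N → ℝ) (αreg : qIndex K K' S → ℝ)
    (hbalpos : ∀ 𝒦 ∈ KKset K K', ∀ p : qIndex K K' S,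
      ∑ i, w i * Apos 𝒦 (Zv i) * qvec K' h (X i) (Zv i) p
        = (2 ^ (K - 1) : ℝ)⁻¹ * ∑ z : Fin K → Bool, gpos 𝒦 z * ∑ i, qvec K' h (X i) z p)
    (hbalneg : ∀ 𝒦 ∈ KKset K K', ∀ p : qIndex K K' S,
      ∑ i, w i * Aneg 𝒦 (Zv i) * qvec K' h (X i) (Zv i) p
        = (2 ^ (K - 1) : ℝ)⁻¹ * ∑ z : Fin K → Bool, gneg 𝒦 z * ∑ i, qvec K' h (X i) z p) :
    ∀ 𝒦 ∈ KKset K K',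
      -- τ̂⁺_{𝒦,Aug} = τ̂⁺_𝒦
      ((N : ℝ)⁻¹ * (∑ i, w i * Apos 𝒦 (Zv i) * (Yobs i - dotP αreg (qvec K' h (X i) (Zv i))))
          + (2 ^ (K - 1) : ℝ)⁻¹ * ((N : ℝ)⁻¹ *
              ∑ z : Fin K → Bool, gpos 𝒦 z * dotP αreg (fun p => ∑ i, qvec K' h (X i) z p))
        = (N : ℝ)⁻¹ * ∑ i, w i * Apos 𝒦 (Zv i) * Yobs i) ∧
      -- τ̂⁻_{𝒦,Aug} = τ̂⁻_𝒦
      ((N : ℝ)⁻¹ * (∑ i, w i * Aneg 𝒦 (Zv i) * (Yobs i - dotP αreg (qvec K' h (X i) (Zv i))))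
          + (2 ^ (K - 1) : ℝ)⁻¹ * ((N : ℝ)⁻¹ *
              ∑ z : Fin K → Bool, gneg 𝒦 z * dotP αreg (fun p => ∑ i, qvec K' h (X i) z p))
        = (N : ℝ)⁻¹ * ∑ i, w i * Aneg 𝒦 (Zv i) * Yobs i) ∧
      -- τ̂_{𝒦,Aug} = τ̂_𝒦
      (((N : ℝ)⁻¹ * (∑ i, w i * Apos 𝒦 (Zv i) * (Yobs i - dotP αreg (qvec K' h (X i) (Zv i))))
          + (2 ^ (K - 1) : ℝ)⁻¹ * ((N : ℝ)⁻¹ *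
              ∑ z : Fin K → Bool, gpos 𝒦 z * dotP αreg (fun p => ∑ i, qvec K' h (X i) z p)))
        - ((N : ℝ)⁻¹ * (∑ i, w i * Aneg 𝒦 (Zv i) * (Yobs i - dotP αreg (qvec K' h (X i) (Zv i))))
          + (2 ^ (K - 1) : ℝ)⁻¹ * ((N : ℝ)⁻¹ *
              ∑ z : Fin K → Bool, gneg 𝒦 z * dotP αreg (fun p => ∑ i, qvec K' h (X i) z p)))
        = (N : ℝ)⁻¹ * (∑ i, w i * Apos 𝒦 (Zv i) * Yobs i)
          - (N : ℝ)⁻¹ * ∑ i, w i * Aneg 𝒦 (Zv i) * Yobs i) := by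

  intro 𝒦 h𝒦
  have keypos : ∑ i, (w i * Apos 𝒦 (Zv i)) * dotP αreg (qvec K' h (X i) (Zv i))
      = (2 ^ (K - 1) : ℝ)⁻¹ * ∑ z : Fin K → Bool,
          gpos 𝒦 z * dotP αreg (fun p => ∑ i, qvec K' h (X i) z p) :=
    key_lemma _ _ _ _ _ _ (fun p => by
      simpa only [mul_assoc] using hbalpos 𝒦 h𝒦 p)
  have keyneg : ∑ i, (w i * Aneg 𝒦 (Zv i)) * dotP αreg (qvec K' h (X i) (Zv i))
      = (2 ^ (K - 1) : ℝ)⁻¹ * ∑ z : Fin K → Bool,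
          gneg 𝒦 z * dotP αreg (fun p => ∑ i, qvec K' h (X i) z p) :=
    key_lemma _ _ _ _ _ _ (fun p => by
      simpa only [mul_assoc] using hbalneg 𝒦 h𝒦 p)
  have epos : ((N : ℝ)⁻¹ * (∑ i, w i * Apos 𝒦 (Zv i) * (Yobs i - dotP αreg (qvec K' h (X i) (Zv i))))
          + (2 ^ (K - 1) : ℝ)⁻¹ * ((N : ℝ)⁻¹ *
              ∑ z : Fin K → Bool, gpos 𝒦 z * dotP αreg (fun p => ∑ i, qvec K' h (X i) z p))
        = (N : ℝ)⁻¹ * ∑ i, w i * Apos 𝒦 (Zv i) * Yobs i) := by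
    have expand : ∑ i, w i * Apos 𝒦 (Zv i) * (Yobs i - dotP αreg (qvec K' h (X i) (Zv i)))
        = (∑ i, w i * Apos 𝒦 (Zv i) * Yobs i)
          - ∑ i, (w i * Apos 𝒦 (Zv i)) * dotP αreg (qvec K' h (X i) (Zv i)) := by
      rw [← Finset.sum_sub_distrib]
      exact Finset.sum_congr rfl fun i _ => by ring
    rw [expand, keypos]; ring
  have eneg : ((N : ℝ)⁻¹ * (∑ i, w i * Aneg 𝒦 (Zv i) * (Yobs i - dotP αreg (qvec K' h (X i) (Zv i))))
          + (2 ^ (K - 1) : ℝ)⁻¹ * ((N : ℝ)⁻¹ *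
              ∑ z : Fin K → Bool, gneg 𝒦 z * dotP αreg (fun p => ∑ i, qvec K' h (X i) z p))
        = (N : ℝ)⁻¹ * ∑ i, w i * Aneg 𝒦 (Zv i) * Yobs i) := by
    have expand : ∑ i, w i * Aneg 𝒦 (Zv i) * (Yobs i - dotP αreg (qvec K' h (X i) (Zv i)))
        = (∑ i, w i * Aneg 𝒦 (Zv i) * Yobs i)
          - ∑ i, (w i * Aneg 𝒦 (Zv i)) * dotP αreg (qvec K' h (X i) (Zv i)) := by
      rw [← Finset.sum_sub_distrib]
      exact Finset.sum_congr rfl fun i _ => by ring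
    rw [expand, keyneg]; ring
  exact ⟨epos, eneg, by rw [epos, eneg]⟩

end
end

section
/- Suppose Y_i^obs = α^T q(X_i, Z_i) + ε_i for each i, and also E[Y_i(z)|X_i] = α^T q(X_i, z) for all z, and suppose the weights ŵ_1,…,ŵ_N satisfy the exact balance constraints Σ_i ŵ_i A⁺_{i𝒦} q(X_i,Z_i) = 2^{−(K−1)} Σ_{z∈Z} g⁺_{𝒦z} Σ_i q(X_i,z) and Σ_i ŵ_i A⁻_{i𝒦} q(X_i,Z_i) = 2^{−(K−1)} Σ_{z∈Z} g⁻_{𝒦z} Σ_i q(X_i,z). Then the estimation error decomposes exactly as τ̂_𝒦 − τ_𝒦 = N^{-1} Σ_i ŵ_i (A⁺_{i𝒦} − A⁻_{i𝒦}) ε_i + [ 2^{−(K−1)} Σ_{z∈Z} g_{𝒦z} N^{-1} Σ_i E[Y_i(z)|X_i] − 2^{−(K−1)} Σ_{z∈Z} g_{𝒦z} E[Y_i(z)] ], where τ̂_𝒦 = N^{-1} Σ_i ŵ_i (A⁺_{i𝒦} − A⁻_{i𝒦}) Y_i^obs and τ_𝒦 = 2^{−(K−1)} Σ_{z∈Z}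 g_{𝒦z} E[Y_i(z)]. -/
open MeasureTheory ProbabilityTheory Filter Finset BoundedContinuousFunction
open scoped NNReal ENNReal

noncomputable section

/-- If `Y_i^obs = αᵀ q(X_i, Z_i) + ε_i`, `E[Y_i(z)|X_i] = αᵀ q(X_i, z)`,
and the weights satisfy the exact balance constraints for contrast `𝒦` (both signs),
then the estimation error decomposes exactly as
`τ̂_𝒦 − τ_𝒦 = N⁻¹ ∑ᵢ ŵᵢ (A⁺ᵢ𝒦 − A⁻ᵢ𝒦) εᵢ +
[ 2^{−(K−1)} ∑_z g_{𝒦z} N⁻¹ ∑ᵢ E[Y_i(z)|X_i] − 2^{−(K−1)} ∑_z g_{𝒦z} E[Y_i(z)] ]`,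
where `EY z` denotes the expectation `E[Y_i(z)]`. -/
theorem statement16 (K K' S D N : ℕ) (hK : 2 ≤ K)
    (𝒦 : Finset (Fin K)) (h𝒦 : 𝒦.Nonempty)
    (h : Fin S → (Fin D → ℝ) → ℝ) (α : qIndex K K' S → ℝ)
    (X : Fin N → Fin D → ℝ) (Zv : Fin N → (Fin K → Bool))
    (ε : Fin N → ℝ) (Yobs : Fin N → ℝ) (w : Fin N → ℝ)
    (EY : (Fin K → Bool) → ℝ)
    (hobs : ∀ i, Yobs i = dotP α (qvec K' h (X i) (Zv i)) + ε i)
    (hbalpos : ∀ p : qIndex K K' S,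
      ∑ i, w i * Apos 𝒦 (Zv i) * qvec K' h (X i) (Zv i) p
        = (2 ^ (K - 1) : ℝ)⁻¹ * ∑ z : Fin K → Bool, gpos 𝒦 z * ∑ i, qvec K' h (X i) z p)
    (hbalneg : ∀ p : qIndex K K' S,
      ∑ i, w i * Aneg 𝒦 (Zv i) * qvec K' h (X i) (Zv i) p
        = (2 ^ (K - 1) : ℝ)⁻¹ * ∑ z : Fin K → Bool, gneg 𝒦 z * ∑ i, qvec K' h (X i) z p) :
    (N : ℝ)⁻¹ * (∑ i, w i * (Apos 𝒦 (Zv i) - Aneg 𝒦 (Zv i)) * Yobs i)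
        - (2 ^ (K - 1) : ℝ)⁻¹ * ∑ z : Fin K → Bool, contrastG 𝒦 z * EY z
      = (N : ℝ)⁻¹ * (∑ i, w i * (Apos 𝒦 (Zv i) - Aneg 𝒦 (Zv i)) * ε i)
        + ((2 ^ (K - 1) : ℝ)⁻¹ *
            (∑ z : Fin K → Bool, contrastG 𝒦 z * ((N : ℝ)⁻¹ * ∑ i, dotP α (qvec K' h (X i) z)))
          - (2 ^ (K - 1) : ℝ)⁻¹ * ∑ z : Fin K → Bool, contrastG 𝒦 z * EY z) := by

  classical
  set c : ℝ := (2 ^ (K - 1) : ℝ)⁻¹ with hc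
  -- turn balance constraints into dotP versions
  have key : ∀ (A : (Fin K → Bool) → ℝ) (g : (Fin K → Bool) → ℝ),
      (∀ p : qIndex K K' S,
        ∑ i, w i * A (Zv i) * qvec K' h (X i) (Zv i) p
          = c * ∑ z : Fin K → Bool, g z * ∑ i, qvec K' h (X i) z p) →
      ∑ i, w i * A (Zv i) * dotP α (qvec K' h (X i) (Zv i))
        = c * ∑ z : Fin K → Bool, g z * ∑ i, dotP α (qvec K' h (X i) z) := by
    intro A g hbal
    have h1 : ∑ i, w i * A (Zv i) * dotP α (qvec K' h (X i) (Zv i))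
        = ∑ p : qIndex K K' S, α p * ∑ i, w i * A (Zv i) * qvec K' h (X i) (Zv i) p := by
      simp only [dotP, Finset.mul_sum]
      rw [Finset.sum_comm]
      apply Finset.sum_congr rfl
      intro p _
      apply Finset.sum_congr rfl
      intro i _
      ring
    have h2 : ∑ p : qIndex K K' S, α p * (c * ∑ z : Fin K → Bool, g z * ∑ i, qvec K' h (X i) z p)
        = c * ∑ z : Fin K → Bool, g z * ∑ i, dotP α (qvec K' h (X i) z) := by
      simp only [dotP, Finset.mul_sum]
      rw [Finset.sum_comm]
      apply Finset.sum_congr rfl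
      intro z _
      rw [Finset.sum_comm]
      apply Finset.sum_congr rfl
      intro i _
      apply Finset.sum_congr rfl
      intro p _
      ring
    rw [h1]
    rw [Finset.sum_congr rfl fun p _ => by rw [hbal p]]
    exact h2
  have hpos := key (Apos 𝒦) (gpos 𝒦) hbalpos
  have hneg := key (Aneg 𝒦) (gneg 𝒦) hbalneg
  have hg : ∀ z : Fin K → Bool, gpos 𝒦 z - gneg 𝒦 z = contrastG 𝒦 z := by
    intro z
    simp only [gpos, gneg]
    rcases le_total (contrastG 𝒦 z) 0 with hle | hle
    · rw [max_eq_right hle, max_eq_left (by linarith)]; ring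
    · rw [max_eq_left hle, max_eq_right (by linarith)]; ring
  have hsplit : ∑ i, w i * (Apos 𝒦 (Zv i) - Aneg 𝒦 (Zv i)) * Yobs i
      = (∑ i, w i * (Apos 𝒦 (Zv i) - Aneg 𝒦 (Zv i)) * ε i)
        + c * ∑ z : Fin K → Bool, contrastG 𝒦 z * ∑ i, dotP α (qvec K' h (X i) z) := by
    have : ∑ i, w i * (Apos 𝒦 (Zv i) - Aneg 𝒦 (Zv i)) * Yobs i
        = (∑ i, w i * (Apos 𝒦 (Zv i) - Aneg 𝒦 (Zv i)) * ε i)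
          + ((∑ i, w i * Apos 𝒦 (Zv i) * dotP α (qvec K' h (X i) (Zv i)))
            - ∑ i, w i * Aneg 𝒦 (Zv i) * dotP α (qvec K' h (X i) (Zv i))) := by
      rw [← Finset.sum_sub_distrib, ← Finset.sum_add_distrib]
      apply Finset.sum_congr rfl
      intro i _
      rw [hobs i]; ring
    rw [this, hpos, hneg, ← mul_sub, ← Finset.sum_sub_distrib]
    congr 1
    congr 1
    apply Finset.sum_congr rfl
    intro z _
    rw [← sub_mul, hg]
  rw [hsplit, mul_add]
  have hcomm : (N : ℝ)⁻¹ * (c * ∑ z : Fin K → Bool, contrastG 𝒦 z * ∑ i, dotP α (qvec K' h (X i) z))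
      = c * ∑ z : Fin K → Bool, contrastG 𝒦 z * ((N : ℝ)⁻¹ * ∑ i, dotP α (qvec K' h (X i) z)) := by
    simp only [Finset.mul_sum]
    apply Finset.sum_congr rfl
    intro z _
    apply Finset.sum_congr rfl
    intro i _
    ring
  rw [hcomm]
  ring


end
end
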